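/- arXiv:2410.15258 — 4 statements merged into one kernel-verified Lean document; each statement's English description precedes it below -/
import Mathlib

section
/- Let $a$ satisfy the degeneracy hypotheses with $\mu_a < 2$. Then for every $u \in V_a^1(0,1)$, $\lim_{x\to 0^+} x\,u^2(x) = 0$. -/
/-- Hypotheses (1.2) on the degeneracy coefficient `a`:
`a ∈ C([0,1]) ∩ C¹((0,1])`, `a > 0` on `(0,1]`, `a(0) = 0`, and
`μ_a = sup x|a'(x)|/a(x)` encoded via the bound `x|a'(x)| ≤ μ_a a(x)` on `(0,1]`. -/
def DegHyp (a a' : ℝ → ℝ) (mua : ℝ) : Prop :=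
  ContinuousOn a (Set.Icc 0 1) ∧
  (∀ x ∈ Set.Ioc (0:ℝ) 1, HasDerivAt a (a' x) x) ∧
  ContinuousOn a' (Set.Ioc 0 1) ∧
  (∀ x ∈ Set.Ioc (0:ℝ) 1, 0 < a x) ∧
  a 0 = 0 ∧ 0 ≤ mua ∧
  (∀ x ∈ Set.Ioc (0:ℝ) 1, x * |a' x| ≤ mua * a x)

/-- `u ∈ V_a^1(0,1)`: `u ∈ L²(0,1)`, `u` locally absolutely continuous on `(0,1]`
(encoded via the integral representation with a.e. derivative `u'`), and
`√a u' ∈ L²(0,1)`. -/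
def MemVa1 (a : ℝ → ℝ) (u u' : ℝ → ℝ) : Prop :=
  MeasureTheory.IntegrableOn (fun x => u x ^ 2) (Set.Ioc 0 1) ∧
  (∀ x ∈ Set.Ioc (0:ℝ) 1, ∀ y ∈ Set.Ioc (0:ℝ) 1, u y - u x = ∫ t in x..y, u' t) ∧
  MeasureTheory.IntegrableOn (fun x => a x * u' x ^ 2) (Set.Ioc 0 1)

/-- `u ∈ W_a^1(0,1)`: `u ∈ V_a^1(0,1)` with `u(0) = 0` (as limit from the right)
when `μ_a < 1`; when `μ_a ∈ [1,2)` the space is all of `V_a^1`. -/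
def MemWa1 (a : ℝ → ℝ) (mua : ℝ) (u u' : ℝ → ℝ) : Prop :=
  MemVa1 a u u' ∧
  (mua < 1 → Filter.Tendsto u (nhdsWithin 0 (Set.Ioi 0)) (nhds 0))

open Set MeasureTheory Filter

/-- Lower bound `a(1) t^ν ≤ a(t)` from the differential inequality `t a'(t) ≤ ν a(t)`. -/
lemma rpow_lower_aux (a a' : ℝ → ℝ) (ν : ℝ)
    (hcont : ContinuousOn a (Set.Icc 0 1))
    (hderiv : ∀ x ∈ Set.Ioc (0:ℝ) 1, HasDerivAt a (a' x) x)
    (hpos : ∀ x ∈ Set.Ioc (0:ℝ) 1, 0 < a x)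
    (hb : ∀ x ∈ Set.Ioc (0:ℝ) 1, x * a' x ≤ ν * a x) :
    ∀ t ∈ Set.Ioc (0:ℝ) 1, a 1 * t ^ ν ≤ a t := by
  intro t ht
  set g : ℝ → ℝ := fun s => a s * s ^ (-ν) with hg
  have hanti : AntitoneOn g (Set.Icc t 1) := by
    apply antitoneOn_of_deriv_nonpos (convex_Icc t 1)
    · apply ContinuousOn.mul (hcont.mono ?_) (ContinuousOn.rpow_const continuousOn_id ?_)
      · intro s hs; exact ⟨le_of_lt (lt_of_lt_of_le ht.1 hs.1), hs.2⟩
      · intro s hs; exact Or.inl (ne_of_gt (lt_of_lt_of_le ht.1 hs.1))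
    · rw [interior_Icc]; intro s hs
      have hs0 : 0 < s := lt_trans ht.1 hs.1
      exact (((hderiv s ⟨hs0, le_of_lt hs.2⟩).mul
        (Real.hasDerivAt_rpow_const (Or.inl (ne_of_gt hs0)))).differentiableAt).differentiableWithinAt
    · rw [interior_Icc]; intro s hs
      have hs0 : 0 < s := lt_trans ht.1 hs.1
      have hmem : s ∈ Set.Ioc (0:ℝ) 1 := ⟨hs0, le_of_lt hs.2⟩
      have hd : HasDerivAt g (a' s * s ^ (-ν) + a s * (-ν * s ^ (-ν - 1))) s :=
        (hderiv s hmem).mul (Real.hasDerivAt_rpow_const (Or.inl (ne_of_gt hs0)))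
      rw [hd.deriv]
      have h1 : s ^ (-ν - 1) = s ^ (-ν) / s := by
        rw [Real.rpow_sub hs0, Real.rpow_one]
      have h2 : (0:ℝ) < s ^ (-ν) := Real.rpow_pos_of_pos hs0 _
      have h3 := hb s hmem
      rw [h1]
      have heq : a' s * s ^ (-ν) + a s * (-ν * (s ^ (-ν) / s))
          = (s * a' s - ν * a s) * (s ^ (-ν) / s) := by
        field_simp
        ring
      rw [heq]
      apply mul_nonpos_of_nonpos_of_nonneg
      · linarith
      · positivity
  have h1 : g 1 ≤ g t :=
    hanti (Set.left_mem_Icc.mpr ht.2) (Set.right_mem_Icc.mpr ht.2) ht.2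
  have hg1 : g 1 = a 1 := by simp [hg]
  rw [hg1] at h1
  have h1' : a 1 ≤ a t * t ^ (-ν) := h1
  have htν : (0:ℝ) < t ^ ν := Real.rpow_pos_of_pos ht.1 _
  rw [Real.rpow_neg (le_of_lt ht.1)] at h1'
  have h2 := mul_le_mul_of_nonneg_right h1' (le_of_lt htν)
  rwa [inv_mul_cancel_right₀ (ne_of_gt htν)] at h2

set_option maxHeartbeats 1000000 in
/-- Proposition 2.1 (1): for every `u ∈ V_a^1(0,1)`, `lim_{x→0⁺} x u(x)² = 0`. -/
theorem stmt_5 (a a' : ℝ → ℝ) (mua : ℝ) (hdeg : DegHyp a a' mua) (hmua2 : mua < 2)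
    (u u' : ℝ → ℝ) (hu : MemVa1 a u u') :
    Filter.Tendsto (fun x => x * u x ^ 2) (nhdsWithin 0 (Set.Ioi 0)) (nhds 0) := by
  obtain ⟨hcont, hderiv, -, hpos, ha0, hmua0, hb⟩ := hdeg
  obtain ⟨hL2, hrep, hE⟩ := hu
  set ν : ℝ := (max 1 mua + 2) / 2 with hνdef
  have hmax1 : (1:ℝ) ≤ max 1 mua := le_max_left 1 mua
  have hmaxm : mua ≤ max 1 mua := le_max_right 1 mua
  have hmax2 : max 1 mua < 2 := max_lt one_lt_two hmua2
  have hν1 : 1 < ν := by rw [hνdef]; linarith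
  have hν2 : ν < 2 := by rw [hνdef]; linarith
  have hμν : mua ≤ ν := by rw [hνdef]; linarith
  have hb' : ∀ x ∈ Set.Ioc (0:ℝ) 1, x * a' x ≤ ν * a x := by
    intro x hx
    have h1 := hb x hx
    have h2 := hpos x hx
    have h3 : x * a' x ≤ x * |a' x| :=
      mul_le_mul_of_nonneg_left (le_abs_self _) (le_of_lt hx.1)
    nlinarith
  have hlow := rpow_lower_aux a a' ν hcont hderiv hpos hb'
  have hc : 0 < a 1 := hpos 1 ⟨one_pos, le_refl 1⟩
  set c := a 1 with hcdef
  set E : ℝ := ∫ t in Set.Ioc (0:ℝ) 1, a t * u' t ^ 2 with hEdef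
  have hE0 : 0 ≤ E := by
    apply setIntegral_nonneg measurableSet_Ioc
    intro t ht
    have := hpos t ht
    positivity
  have hν1' : (0:ℝ) < ν - 1 := by linarith
  set D : ℝ := (E + 1 / (ν - 1) / c) / 2 with hDdef
  have hD0 : 0 ≤ D := by
    have h : (0:ℝ) ≤ 1 / (ν - 1) / c := by positivity
    rw [hDdef]; linarith
  -- key pointwise bound
  have key : ∀ x ∈ Set.Ioo (0:ℝ) 1,
      x * u x ^ 2 ≤ 2 * u 1 ^ 2 * x + 2 * D ^ 2 * x ^ (2 - ν) := by
    intro x hx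
    have hx0 : 0 < x := hx.1
    have hx1 : x < 1 := hx.2
    set lam : ℝ := x ^ ((1 - ν) / 2) with hlamdef
    have hlam0 : 0 < lam := Real.rpow_pos_of_pos hx0 _
    set g : ℝ → ℝ := fun t => (lam * (a t * u' t ^ 2) + (1 / lam) * (t ^ (-ν) / c)) / 2
      with hgdef
    have hint_pow : IntegrableOn (fun t : ℝ => t ^ (-ν)) (Set.Ioc x 1) := by
      apply (ContinuousOn.integrableOn_Icc ?_).mono_set Set.Ioc_subset_Icc_self
      exact ContinuousOn.rpow_const continuousOn_id
        (fun t ht => Or.inl (ne_of_gt (lt_of_lt_of_le hx0 ht.1)))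
    have hsub : Set.Ioc x 1 ⊆ Set.Ioc (0:ℝ) 1 := Set.Ioc_subset_Ioc (le_of_lt hx0) le_rfl
    have hint_au : IntegrableOn (fun t => a t * u' t ^ 2) (Set.Ioc x 1) := hE.mono_set hsub
    have hgint : IntegrableOn g (Set.Ioc x 1) := by
      apply Integrable.div_const
      exact (hint_au.const_mul _).add ((hint_pow.div_const _).const_mul _)
    have hptwise : ∀ t ∈ Set.Ioc x 1, ‖u' t‖ ≤ g t := by
      intro t ht
      have ht' : t ∈ Set.Ioc (0:ℝ) 1 := ⟨lt_trans hx0 ht.1, ht.2⟩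
      have hat : 0 < a t := hpos t ht'
      have hlow' := hlow t ht'
      have htν : (0:ℝ) < t ^ ν := Real.rpow_pos_of_pos ht'.1 _
      have h1 : 1 / a t ≤ t ^ (-ν) / c := by
        rw [Real.rpow_neg (le_of_lt ht'.1)]
        rw [div_le_div_iff₀ hat hc, one_mul, inv_mul_eq_div, le_div_iff₀ htν]
        linarith
      have h2 : |u' t| ≤ (lam * (a t * u' t ^ 2) + (1 / lam) * (1 / a t)) / 2 := by
        have hexp : (lam * a t * |u' t| - 1) ^ 2
            = lam ^ 2 * a t ^ 2 * u' t ^ 2 - 2 * (lam * a t) * |u' t| + 1 := by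
          rw [sub_sq, mul_pow, mul_pow, sq_abs]
          ring
        have hkey : (0:ℝ) ≤ lam ^ 2 * a t ^ 2 * u' t ^ 2 - 2 * (lam * a t) * |u' t| + 1 := by
          rw [← hexp]; exact sq_nonneg _
        have hpos2 : 0 < lam * a t := mul_pos hlam0 hat
        rw [show (lam * (a t * u' t ^ 2) + 1 / lam * (1 / a t))
            = (lam ^ 2 * a t ^ 2 * u' t ^ 2 + 1) / (lam * a t) by field_simp]
        rw [div_div, le_div_iff₀ (by positivity)]
        nlinarith [abs_nonneg (u' t)]
      rw [Real.norm_eq_abs]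
      refine h2.trans ?_
      rw [hgdef]
      have h3 : (1 / lam) * (1 / a t) ≤ (1 / lam) * (t ^ (-ν) / c) :=
        mul_le_mul_of_nonneg_left h1 (by positivity)
      simp only
      linarith
    have hnormint : ‖∫ t in Set.Ioc x 1, u' t‖ ≤ ∫ t in Set.Ioc x 1, g t := by
      apply norm_integral_le_of_norm_le hgint
      rw [ae_restrict_iff' measurableSet_Ioc]
      exact ae_of_all _ hptwise
    -- bound ∫ g
    have hEsub : ∫ t in Set.Ioc x 1, a t * u' t ^ 2 ≤ E := by
      rw [hEdef]
      apply setIntegral_mono_set hE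
      · rw [EventuallyLE, ae_restrict_iff' measurableSet_Ioc]
        apply ae_of_all
        intro t ht
        have := hpos t ht
        positivity
      · exact HasSubset.Subset.eventuallyLE hsub
    have hpowint : ∫ t in Set.Ioc x 1, t ^ (-ν) ≤ x ^ (1 - ν) / (ν - 1) := by
      rw [← intervalIntegral.integral_of_le (le_of_lt hx1)]
      have hne : -ν ≠ -1 := by intro h; rw [neg_inj] at h; rw [h] at hν1; norm_num at hν1
      have hnotmem : (0:ℝ) ∉ Set.uIcc x 1 := by
        rw [Set.uIcc_of_le (le_of_lt hx1)]
        intro h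
        exact absurd h.1 (not_le.mpr hx0)
      rw [integral_rpow (Or.inr ⟨hne, hnotmem⟩)]
      have h1 : -ν + 1 = 1 - ν := by ring
      rw [h1, Real.one_rpow]
      have hX : (0:ℝ) < x ^ (1 - ν) := Real.rpow_pos_of_pos hx0 _
      have heq : (1 - x ^ (1 - ν)) / (1 - ν) = (x ^ (1 - ν) - 1) / (ν - 1) := by
        have h2 : ν - 1 ≠ 0 := ne_of_gt hν1'
        have h3 : (1:ℝ) - ν ≠ 0 := by intro h; apply h2; linarith
        field_simp
        ring
      rw [heq]
      gcongr
      linarith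
    have hgval : ∫ t in Set.Ioc x 1, g t
        ≤ (lam * E + (1 / lam) * (x ^ (1 - ν) / (ν - 1) / c)) / 2 := by
      rw [hgdef]
      simp only
      rw [integral_div, integral_add (hint_au.const_mul _) ((hint_pow.div_const _).const_mul _),
        integral_const_mul, integral_const_mul, integral_div]
      have h1 : lam * ∫ t in Set.Ioc x 1, a t * u' t ^ 2 ≤ lam * E :=
        mul_le_mul_of_nonneg_left hEsub (le_of_lt hlam0)
      have h2 : (1 / lam) * ((∫ t in Set.Ioc x 1, t ^ (-ν)) / c)
          ≤ (1 / lam) * (x ^ (1 - ν) / (ν - 1) / c) := by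
        gcongr
      linarith
    -- assemble the bound on |u x|
    have hrepx := hrep x ⟨hx0, le_of_lt hx1⟩ 1 ⟨one_pos, le_rfl⟩
    rw [intervalIntegral.integral_of_le (le_of_lt hx1)] at hrepx
    have hlam2 : lam * lam = x ^ (1 - ν) := by
      rw [hlamdef, ← Real.rpow_add hx0]
      congr 1
      ring
    have hbound : |u x| ≤ |u 1| + lam * D := by
      have hux : u x = u 1 - ∫ t in Set.Ioc x 1, u' t := by linarith
      have e1 : (1 / lam) * (x ^ (1 - ν) / (ν - 1) / c) = lam * (1 / (ν - 1) / c) := by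
        rw [← hlam2]
        field_simp
      calc |u x| = ‖u 1 - ∫ t in Set.Ioc x 1, u' t‖ := by rw [← hux, Real.norm_eq_abs]
        _ ≤ ‖u 1‖ + ‖∫ t in Set.Ioc x 1, u' t‖ := norm_sub_le _ _
        _ ≤ |u 1| + (lam * E + (1 / lam) * (x ^ (1 - ν) / (ν - 1) / c)) / 2 := by
            rw [Real.norm_eq_abs]
            linarith [hnormint.trans hgval]
        _ = |u 1| + lam * D := by rw [e1, hDdef]; ring
    have h2ν : x ^ ((2:ℝ) - ν) = x * x ^ (1 - ν) := by
      rw [show (2:ℝ) - ν = 1 + (1 - ν) by ring, Real.rpow_add hx0, Real.rpow_one]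
    have hx2 : x * (lam * lam) = x ^ ((2:ℝ) - ν) := by rw [hlam2, h2ν]
    have husq : u x ^ 2 ≤ (|u 1| + lam * D) ^ 2 := by
      rw [← sq_abs (u x)]
      apply pow_le_pow_left₀ (abs_nonneg _) hbound
    have hfin1 := mul_le_mul_of_nonneg_left husq (le_of_lt hx0)
    have hfin2 := mul_nonneg (le_of_lt hx0) (sq_nonneg (|u 1| - lam * D))
    have hfin3 : |u 1| ^ 2 = u 1 ^ 2 := sq_abs (u 1)
    clear_value D E lam ν
    nlinarith [hfin1, hfin2, hfin3, hx2]
  -- squeeze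
  have hmem : Set.Ioo (0:ℝ) 1 ∈ nhdsWithin (0:ℝ) (Set.Ioi 0) :=
    Ioo_mem_nhdsGT_of_mem ⟨le_refl 0, one_pos⟩
  refine squeeze_zero' (g := fun x : ℝ => 2 * u 1 ^ 2 * x + 2 * D ^ 2 * x ^ ((2:ℝ) - ν)) ?_ ?_ ?_
  · filter_upwards [self_mem_nhdsWithin] with t ht
    exact mul_nonneg (le_of_lt ht) (sq_nonneg _)
  · filter_upwards [hmem] with t ht
    exact key t ht
  · have h1 : Tendsto (fun x : ℝ => 2 * u 1 ^ 2 * x) (nhdsWithin 0 (Set.Ioi 0)) (nhds 0) := by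
      have h : Continuous fun x : ℝ => 2 * u 1 ^ 2 * x := continuous_const.mul continuous_id
      have h' := (h.tendsto 0).mono_left
        (nhdsWithin_le_nhds : nhdsWithin (0:ℝ) (Set.Ioi 0) ≤ nhds 0)
      simpa using h'
    have h2 : Tendsto (fun x : ℝ => x ^ ((2:ℝ) - ν)) (nhdsWithin 0 (Set.Ioi 0)) (nhds 0) := by
      have hc2 := (Real.continuousAt_rpow_const 0 (2 - ν) (Or.inr (by linarith))).tendsto
      rw [Real.zero_rpow (by intro h; rw [sub_eq_zero] at h; rw [← h] at hν2; norm_num at hν2)]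
        at hc2
      exact hc2.mono_left nhdsWithin_le_nhds
    simpa using h1.add (h2.const_mul (2 * D ^ 2))
end

section
/- Let $a$ satisfy the degeneracy hypotheses with $\mu_a<2$. Then for every $u \in W_a^1(0,1)$: $\|u\|_{L^2(0,1)}^2 \le 2|u(1)|^2 + C_a'\int_0^1 a(x)|u'(x)|^2 dx$, where $C_a' = \frac{1}{a(1)}\min\{4, \frac{2}{2-\mu_a}\}$. -/
open MeasureTheory Set

section HardyAux

lemma cs2 {μ : Measure ℝ} {f g : ℝ → ℝ} (hf : MemLp f 2 μ) (hg : MemLp g 2 μ) :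
    |∫ x, f x * g x ∂μ| ≤
      Real.sqrt (∫ x, f x ^ 2 ∂μ) * Real.sqrt (∫ x, g x ^ 2 ∂μ) := by
  have hpq : Real.HolderConjugate 2 2 := Real.HolderConjugate.two_two
  have hf2 : MemLp f (ENNReal.ofReal 2) μ := by
    simpa [ENNReal.ofReal_ofNat] using hf
  have hg2 : MemLp g (ENNReal.ofReal 2) μ := by
    simpa [ENNReal.ofReal_ofNat] using hg
  have h1 : |∫ x, f x * g x ∂μ| ≤ ∫ x, ‖f x‖ * ‖g x‖ ∂μ := by
    calc |∫ x, f x * g x ∂μ| = ‖∫ x, f x * g x ∂μ‖ := (Real.norm_eq_abs _).symm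
    _ ≤ ∫ x, ‖f x * g x‖ ∂μ := norm_integral_le_integral_norm _
    _ = ∫ x, ‖f x‖ * ‖g x‖ ∂μ := by simp [norm_mul]
  refine h1.trans ?_
  have h2 := MeasureTheory.integral_mul_norm_le_Lp_mul_Lq hpq hf2 hg2
  have ef : ∀ (h : ℝ → ℝ), (∫ x, ‖h x‖ ^ (2:ℝ) ∂μ) = ∫ x, h x ^ 2 ∂μ := by
    intro h
    refine integral_congr_ae (Filter.Eventually.of_forall fun x => ?_)
    simp only [Real.norm_eq_abs]
    rw [show ((2:ℝ)) = ((2:ℕ):ℝ) by norm_num, Real.rpow_natCast, sq_abs]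
  rw [ef f, ef g] at h2
  refine h2.trans_eq ?_
  rw [Real.sqrt_eq_rpow, Real.sqrt_eq_rpow]

section swap

variable {x : ℝ} {h : ℝ → ℝ}

lemma sw_aux (hx : x ≤ 1) (hh : IntegrableOn h (Ioc x 1)) :
    ∫ t in Ioc x 1, (∫ s in Ioc t 1, h s) = ∫ s in Ioc x 1, (s - x) * h s := by
  set T : Set ℝ := Ioc x 1 with hT
  have hTm : MeasurableSet T := measurableSet_Ioc
  set μT : Measure ℝ := volume.restrict T with hμT
  haveI : IsFiniteMeasure μT := by
    constructor
    rw [hμT, Measure.restrict_apply_univ, hT, Real.volume_Ioc]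
    exact ENNReal.ofReal_lt_top
  have hbase : Integrable (fun p : ℝ × ℝ => (1:ℝ) * h p.2) (μT.prod μT) :=
    Integrable.mul_prod (integrable_const 1) hh
  have hbase' : Integrable (fun p : ℝ × ℝ => h p.2) (μT.prod μT) := by
    simpa using hbase
  have hsm : MeasurableSet {p : ℝ × ℝ | p.1 < p.2} := measurableSet_lt measurable_fst measurable_snd
  have hF : Integrable ({p : ℝ × ℝ | p.1 < p.2}.indicator fun p => h p.2) (μT.prod μT) :=
    hbase'.indicator hsm
  have key := integral_integral_swap (f := fun t s : ℝ =>
    ({p : ℝ × ℝ | p.1 < p.2}.indicator fun p => h p.2) (t, s)) (μ := μT) (ν := μT) hF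
  -- LHS identification
  have hL : (∫ t, (∫ s, ({p : ℝ × ℝ | p.1 < p.2}.indicator fun p => h p.2) (t, s) ∂μT) ∂μT)
      = ∫ t in T, (∫ s in Ioc t 1, h s) := by
    rw [hμT]
    refine setIntegral_congr_fun hTm (fun t htT => ?_)
    have : ∀ s : ℝ, ({p : ℝ × ℝ | p.1 < p.2}.indicator fun p => h p.2) (t, s)
        = (Ioi t).indicator h s := by
      intro s
      by_cases hts : t < s
      · rw [Set.indicator_of_mem (by exact hts) , Set.indicator_of_mem (by exact hts)]
      · rw [Set.indicator_of_notMem (by exact hts), Set.indicator_of_notMem (by exact hts)]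
    simp_rw [this]
    rw [setIntegral_indicator measurableSet_Ioi]
    congr 1
    rw [hT, Set.Ioc_inter_Ioi, max_eq_right htT.1.le]
  -- RHS identification
  have hR : (∫ s, (∫ t, ({p : ℝ × ℝ | p.1 < p.2}.indicator fun p => h p.2) (t, s) ∂μT) ∂μT)
      = ∫ s in T, (s - x) * h s := by
    rw [hμT]
    refine setIntegral_congr_fun hTm (fun s hsT => ?_)
    have : ∀ t : ℝ, ({p : ℝ × ℝ | p.1 < p.2}.indicator fun p => h p.2) (t, s)
        = (Iio s).indicator (fun _ => h s) t := by
      intro t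
      by_cases hts : t < s
      · rw [Set.indicator_of_mem (by exact hts), Set.indicator_of_mem (by exact hts)]
      · rw [Set.indicator_of_notMem (by exact hts), Set.indicator_of_notMem (by exact hts)]
    simp_rw [this]
    rw [setIntegral_indicator measurableSet_Iio, setIntegral_const]
    have : T ∩ Iio s = Ioo x s := by
      ext t
      simp only [hT, Set.mem_inter_iff, Set.mem_Ioc, Set.mem_Iio, Set.mem_Ioo]
      constructor
      · rintro ⟨⟨h1, _⟩, h3⟩; exact ⟨h1, h3⟩
      · rintro ⟨h1, h2⟩; exact ⟨⟨h1, (le_of_lt (lt_of_lt_of_le h2 hsT.2))⟩, h2⟩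
    rw [this, Real.volume_real_Ioo_of_le (by linarith [hsT.1])]
    rw [smul_eq_mul]
  rw [hL, hR] at key
  exact key

end swap

lemma sy_aux {x : ℝ} {h : ℝ → ℝ} (hx : x ≤ 1) (hh : IntegrableOn h (Ioc x 1)) :
    ∫ t in Ioc x 1, (∫ s in Ioc t 1, h s) * h t = (∫ s in Ioc x 1, h s) ^ 2 / 2 := by
  set T : Set ℝ := Ioc x 1 with hT
  have hTm : MeasurableSet T := measurableSet_Ioc
  set μT : Measure ℝ := volume.restrict T with hμT
  haveI : IsFiniteMeasure μT := by
    constructor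
    rw [hμT, Measure.restrict_apply_univ, hT, Real.volume_Ioc]
    exact ENNReal.ofReal_lt_top
  set R : ℝ → ℝ := fun t => ∫ s in Ioc t 1, h s with hR
  set A : ℝ := ∫ s in T, h s with hA
  -- continuity and boundedness of the primitive P t = ∫ s in Ioc x t, h s
  have hP : ContinuousOn (fun t => ∫ s in Ioc x t, h s) (Icc x 1) :=
    intervalIntegral.continuousOn_primitive (by
      rw [integrableOn_Icc_iff_integrableOn_Ioc]; exact hh)
  -- R t = A - P t  on T
  have hsplit : ∀ t ∈ T, A = (∫ s in Ioc x t, h s) + R t := by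
    intro t htT
    rw [hA, hR, hT]
    rw [← Set.Ioc_union_Ioc_eq_Ioc htT.1.le htT.2, setIntegral_union (Set.Ioc_disjoint_Ioc_of_le le_rfl)
      measurableSet_Ioc (hh.mono_set (Set.Ioc_subset_Ioc_right htT.2))
      (hh.mono_set (Set.Ioc_subset_Ioc_left htT.1.le))]
  have hRcont : ContinuousOn R (Icc x 1) := by
    have : ∀ t ∈ Icc x 1, R t = A - (∫ s in Ioc x t, h s) := by
      intro t htI
      rcases eq_or_lt_of_le htI.1 with heq | hlt
      · subst heq
        simp [hR, hA, hT]
      · have := hsplit t ⟨hlt, htI.2⟩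
        linarith
    exact (continuousOn_congr this).mpr (continuousOn_const.sub hP)
  have hRbdd : ∃ C, ∀ t ∈ Icc x 1, ‖R t‖ ≤ C :=
    IsCompact.exists_bound_of_continuousOn isCompact_Icc hRcont
  have hRmeas : AEStronglyMeasurable R μT :=
    (hRcont.mono (Set.Ioc_subset_Icc_self)).aestronglyMeasurable hTm
  have hRh : Integrable (fun t => R t * h t) μT := by
    obtain ⟨C, hC⟩ := hRbdd
    refine Integrable.bdd_mul (c := C) hh hRmeas ?_
    rw [hμT]
    rw [ae_restrict_iff' hTm]
    exact Filter.Eventually.of_forall (fun t htT => hC t (Set.Ioc_subset_Icc_self htT))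
  -- the product-integrable kernel
  have hbase : Integrable (fun p : ℝ × ℝ => h p.1 * h p.2) (μT.prod μT) :=
    Integrable.mul_prod hh hh
  have hsm : MeasurableSet {p : ℝ × ℝ | p.2 < p.1} := measurableSet_lt measurable_snd measurable_fst
  have hF : Integrable ({p : ℝ × ℝ | p.2 < p.1}.indicator fun p => h p.1 * h p.2) (μT.prod μT) :=
    hbase.indicator hsm
  have key := integral_integral_swap (f := fun t s : ℝ =>
    ({p : ℝ × ℝ | p.2 < p.1}.indicator fun p => h p.1 * h p.2) (t, s)) (μ := μT) (ν := μT) hF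
  -- LHS of key: iterated with t outer
  have hL : (∫ t, (∫ s, ({p : ℝ × ℝ | p.2 < p.1}.indicator fun p => h p.1 * h p.2) (t, s) ∂μT) ∂μT)
      = A ^ 2 - ∫ t in T, R t * h t := by
    have step1 : (∫ t, (∫ s, ({p : ℝ × ℝ | p.2 < p.1}.indicator fun p => h p.1 * h p.2) (t, s) ∂μT) ∂μT)
        = ∫ t in T, (A - R t) * h t := by
      rw [hμT]
      refine setIntegral_congr_fun hTm (fun t htT => ?_)
      have e1 : ∀ s : ℝ, ({p : ℝ × ℝ | p.2 < p.1}.indicator fun p => h p.1 * h p.2) (t, s)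
          = (Iio t).indicator (fun s => h t * h s) s := by
        intro s
        by_cases hts : s < t
        · rw [Set.indicator_of_mem (by exact hts), Set.indicator_of_mem (by exact hts)]
        · rw [Set.indicator_of_notMem (by exact hts), Set.indicator_of_notMem (by exact hts)]
      simp_rw [e1]
      rw [setIntegral_indicator measurableSet_Iio]
      have e2 : T ∩ Iio t = Ioo x t := by
        ext s
        simp only [hT, Set.mem_inter_iff, Set.mem_Ioc, Set.mem_Iio, Set.mem_Ioo]
        constructor
        · rintro ⟨⟨h1, _⟩, h3⟩; exact ⟨h1, h3⟩
        · rintro ⟨h1, h2⟩; exact ⟨⟨h1, (le_of_lt (lt_of_lt_of_le h2 htT.2))⟩, h2⟩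
      rw [e2, MeasureTheory.integral_const_mul, ← MeasureTheory.integral_Ioc_eq_integral_Ioo]
      have e3 : (∫ s in Ioc x t, h s) = A - R t := by have := hsplit t htT; linarith
      rw [e3]; ring
    rw [step1]
    have : ∀ t ∈ T, (A - R t) * h t = A * h t - R t * h t := by intro t _; ring
    rw [setIntegral_congr_fun hTm this, integral_sub ((hh.const_mul A)) hRh,
      MeasureTheory.integral_const_mul]
    rw [← hA]
    ring
  -- RHS of key: iterated with s outer
  have hRside : (∫ s, (∫ t, ({p : ℝ × ℝ | p.2 < p.1}.indicator fun p => h p.1 * h p.2) (t, s) ∂μT) ∂μT)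
      = ∫ t in T, R t * h t := by
    rw [hμT]
    refine setIntegral_congr_fun hTm (fun s hsT => ?_)
    have e1 : ∀ t : ℝ, ({p : ℝ × ℝ | p.2 < p.1}.indicator fun p => h p.1 * h p.2) (t, s)
        = (Ioi s).indicator (fun t => h t * h s) t := by
      intro t
      by_cases hts : s < t
      · rw [Set.indicator_of_mem (by exact hts), Set.indicator_of_mem (by exact hts)]
      · rw [Set.indicator_of_notMem (by exact hts), Set.indicator_of_notMem (by exact hts)]
    simp_rw [e1]
    rw [setIntegral_indicator measurableSet_Ioi]
    have e2 : T ∩ Ioi s = Ioc s 1 := by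
      rw [hT, Set.Ioc_inter_Ioi, max_eq_right hsT.1.le]
    rw [e2, MeasureTheory.integral_mul_const]
  rw [hL, hRside] at key
  have : ∫ t in T, R t * h t = A ^ 2 / 2 := by linarith
  exact this

lemma a_lower {a a' : ℝ → ℝ} {mua : ℝ}
    (hder : ∀ x ∈ Ioc (0:ℝ) 1, HasDerivAt a (a' x) x)
    (hpos : ∀ x ∈ Ioc (0:ℝ) 1, 0 < a x)
    (hbound : ∀ x ∈ Ioc (0:ℝ) 1, x * |a' x| ≤ mua * a x) :
    ∀ x ∈ Ioc (0:ℝ) 1, a 1 * x ^ mua ≤ a x := by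
  intro x hx
  set φ : ℝ → ℝ := fun z => a z * z ^ (-mua) with hφ
  have hder' : ∀ z ∈ Icc x 1, HasDerivAt φ
      (a' z * z ^ (-mua) + a z * (-mua * z ^ (-mua - 1))) z := by
    intro z hz
    have hz0 : 0 < z := lt_of_lt_of_le hx.1 hz.1
    exact ((hder z ⟨hz0, hz.2⟩).mul (Real.hasDerivAt_rpow_const (Or.inl hz0.ne')))
  have hanti : AntitoneOn φ (Icc x 1) := by
    refine antitoneOn_of_deriv_nonpos (convex_Icc x 1) ?_ ?_ ?_
    · exact fun z hz => ((hder' z hz).continuousAt).continuousWithinAt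
    · intro z hz
      have hz' : z ∈ Icc x 1 := interior_subset hz
      exact ((hder' z hz').differentiableAt).differentiableWithinAt
    · intro z hz
      rw [interior_Icc] at hz
      have hz0 : 0 < z := lt_of_lt_of_le hx.1 hz.1.le
      have hzI : z ∈ Ioc (0:ℝ) 1 := ⟨hz0, hz.2.le⟩
      rw [((hder' z ⟨hz.1.le, hz.2.le⟩).deriv)]
      have h1 : a' z * z ^ (-mua) ≤ mua * a z * z ^ (-mua - 1) := by
        have hb := hbound z hzI
        have h2 : a' z ≤ |a' z| := le_abs_self _
        have h3 : |a' z| ≤ mua * a z / z := by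
          rw [le_div_iff₀ hz0]
          nlinarith [hbound z hzI]
        have h4 : z ^ (-mua - 1) = z ^ (-mua) / z := by
          rw [Real.rpow_sub hz0, Real.rpow_one]
        have h5 : z ^ (-mua) > 0 := Real.rpow_pos_of_pos hz0 _
        calc a' z * z ^ (-mua) ≤ (mua * a z / z) * z ^ (-mua) := by nlinarith
        _ = mua * a z * (z ^ (-mua) / z) := by ring
        _ = mua * a z * z ^ (-mua - 1) := by rw [h4]
      nlinarith
  have := hanti ⟨le_refl x, hx.2⟩ ⟨hx.2, le_refl 1⟩ hx.2
  rw [hφ] at this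
  simp only [Real.one_rpow] at this
  have h1 : a 1 * 1 ≤ a x * x ^ (-mua) := by
    simpa using this
  have hx0 : (0:ℝ) < x := hx.1
  have hxp : 0 < x ^ mua := Real.rpow_pos_of_pos hx0 _
  have h2 : x ^ (-mua) * x ^ mua = 1 := by
    rw [← Real.rpow_add hx0]; simp
  have h3 : a 1 * x ^ mua ≤ a x * x ^ (-mua) * x ^ mua := by nlinarith
  have h4 : a x * x ^ (-mua) * x ^ mua = a x := by
    rw [mul_assoc, h2, mul_one]
  linarith

lemma lim_le {f : ℝ → ℝ} (hf : IntegrableOn f (Ioc 0 1)) {B : ℝ}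
    (hB : ∀ y : ℝ, 0 < y → y ≤ 1 → (∫ t in Ioc y 1, f t) ≤ B) :
    (∫ t in Ioc (0:ℝ) 1, f t) ≤ B := by
  set s : ℕ → Set ℝ := fun n => Ioc (1/(n+1) : ℝ) 1 with hs
  have hsm : ∀ n, MeasurableSet (s n) := fun n => measurableSet_Ioc
  have hmono : Monotone s := by
    intro m n hmn
    apply Set.Ioc_subset_Ioc_left
    apply one_div_le_one_div_of_le
    · positivity
    · exact_mod_cast by exact_mod_cast add_le_add_left (Nat.cast_le.mpr hmn) 1
  have hU : ⋃ n, s n = Ioc (0:ℝ) 1 := by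
    ext t
    simp only [hs, Set.mem_iUnion, Set.mem_Ioc]
    constructor
    · rintro ⟨n, h1, h2⟩
      refine ⟨lt_trans (by positivity) h1, h2⟩
    · rintro ⟨h1, h2⟩
      obtain ⟨n, hn⟩ := exists_nat_one_div_lt h1
      exact ⟨n, by exact_mod_cast hn, h2⟩
  have htd := tendsto_setIntegral_of_monotone hsm hmono (by rw [hU]; exact hf)
  rw [hU] at htd
  refine le_of_tendsto htd (Filter.Eventually.of_forall fun n => ?_)
  refine hB _ (by positivity) ?_
  rw [div_le_one (by positivity)]
  exact le_add_of_nonneg_left (Nat.cast_nonneg n)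

lemma weighted {a a' u' : ℝ → ℝ} {mua x r : ℝ}
    (hder : ∀ t ∈ Ioc (0:ℝ) 1, HasDerivAt a (a' t) t)
    (hpos : ∀ t ∈ Ioc (0:ℝ) 1, 0 < a t)
    (hbound : ∀ t ∈ Ioc (0:ℝ) 1, t * |a' t| ≤ mua * a t)
    (hw2 : IntegrableOn (fun t => a t * u' t ^ 2) (Ioc 0 1))
    (hx : 0 < x) (hx1 : x ≤ 1) (hrm : mua ≤ r)
    (hu' : IntegrableOn u' (Ioc x 1)) :
    IntegrableOn (fun t => t ^ r * u' t ^ 2) (Ioc x 1) ∧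
    (∫ t in Ioc x 1, t ^ r * u' t ^ 2) ≤ (1 / a 1) * ∫ t in Ioc (0:ℝ) 1, a t * u' t ^ 2 := by
  have ha1 : 0 < a 1 := hpos 1 ⟨zero_lt_one, le_refl 1⟩
  have hsub : Ioc x 1 ⊆ Ioc (0:ℝ) 1 := Set.Ioc_subset_Ioc_left hx.le
  have hlow := a_lower hder hpos hbound
  have hptw : ∀ t ∈ Ioc x 1, t ^ r * u' t ^ 2 ≤ (1 / a 1) * (a t * u' t ^ 2) := by
    intro t ht
    have htI : t ∈ Ioc (0:ℝ) 1 := hsub ht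
    have h1 : t ^ r ≤ t ^ mua := Real.rpow_le_rpow_of_exponent_ge htI.1 htI.2 hrm
    have h2 : a 1 * t ^ mua ≤ a t := hlow t htI
    have h3 : t ^ mua ≤ a t / a 1 := by rw [le_div_iff₀ ha1]; nlinarith
    have h4 : t ^ r ≤ a t / a 1 := le_trans h1 h3
    have h5 : (0:ℝ) ≤ u' t ^ 2 := sq_nonneg _
    calc t ^ r * u' t ^ 2 ≤ (a t / a 1) * u' t ^ 2 := by nlinarith
    _ = (1 / a 1) * (a t * u' t ^ 2) := by ring
  have hmeas : AEStronglyMeasurable (fun t => t ^ r * u' t ^ 2) (volume.restrict (Ioc x 1)) := by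
    have h1 : ContinuousOn (fun t : ℝ => t ^ r) (Ioc x 1) := by
      intro t ht
      exact (Real.continuousAt_rpow_const t r
        (Or.inl (ne_of_gt (lt_of_le_of_lt hx.le ht.1)))).continuousWithinAt
    have h2 : AEStronglyMeasurable u' (volume.restrict (Ioc x 1)) := hu'.aestronglyMeasurable
    have h3 := (h1.aestronglyMeasurable measurableSet_Ioc).mul (h2.mul h2)
    refine h3.congr (Filter.Eventually.of_forall fun t => ?_)
    simp only [Pi.mul_apply]
    ring
  have hint2 : IntegrableOn (fun t => (1 / a 1) * (a t * u' t ^ 2)) (Ioc x 1) :=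
    (hw2.mono_set hsub).const_mul _
  have hint : IntegrableOn (fun t => t ^ r * u' t ^ 2) (Ioc x 1) := by
    refine Integrable.mono' hint2 hmeas ?_
    refine (ae_restrict_iff' measurableSet_Ioc).mpr (Filter.Eventually.of_forall fun t ht => ?_)
    rw [Real.norm_eq_abs, abs_of_nonneg (mul_nonneg
      (Real.rpow_nonneg (le_of_lt (lt_trans hx ht.1)) _) (sq_nonneg _))]
    exact hptw t ht
  refine ⟨hint, ?_⟩
  calc (∫ t in Ioc x 1, t ^ r * u' t ^ 2)
      ≤ ∫ t in Ioc x 1, (1 / a 1) * (a t * u' t ^ 2) :=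
        setIntegral_mono_on hint hint2 measurableSet_Ioc hptw
    _ = (1 / a 1) * ∫ t in Ioc x 1, a t * u' t ^ 2 := by rw [MeasureTheory.integral_const_mul]
    _ ≤ (1 / a 1) * ∫ t in Ioc (0:ℝ) 1, a t * u' t ^ 2 := by
        refine mul_le_mul_of_nonneg_left ?_ (one_div_nonneg.mpr ha1.le)
        refine setIntegral_mono_set hw2 ?_ (HasSubset.Subset.eventuallyLE hsub)
        refine (ae_restrict_iff' measurableSet_Ioc).mpr (Filter.Eventually.of_forall fun t ht => ?_)
        exact mul_nonneg (hpos t ht).le (sq_nonneg _)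

-- continuity of the tail integral
lemma cont_tail {x : ℝ} {h : ℝ → ℝ} (hx : x ≤ 1) (hh : IntegrableOn h (Ioc x 1)) :
    ContinuousOn (fun t => ∫ s in Ioc t 1, h s) (Icc x 1) := by
  have hP : ContinuousOn (fun t => ∫ s in Ioc x t, h s) (Icc x 1) :=
    intervalIntegral.continuousOn_primitive (by
      rw [integrableOn_Icc_iff_integrableOn_Ioc]; exact hh)
  have hsplit : ∀ t ∈ Icc x 1, (∫ s in Ioc t 1, h s)
      = (∫ s in Ioc x 1, h s) - ∫ s in Ioc x t, h s := by
    intro t htI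
    have : (∫ s in Ioc x 1, h s) = (∫ s in Ioc x t, h s) + ∫ s in Ioc t 1, h s := by
      rw [← Set.Ioc_union_Ioc_eq_Ioc htI.1 htI.2, setIntegral_union (Set.Ioc_disjoint_Ioc_of_le le_rfl)
        measurableSet_Ioc (hh.mono_set (Set.Ioc_subset_Ioc_right htI.2))
        (hh.mono_set (Set.Ioc_subset_Ioc_left htI.1))]
    linarith
  exact (continuousOn_congr hsplit).mpr (continuousOn_const.sub hP)

lemma routeA {a a' u u' : ℝ → ℝ} {mua : ℝ}
    (hder : ∀ t ∈ Ioc (0:ℝ) 1, HasDerivAt a (a' t) t)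
    (hpos : ∀ t ∈ Ioc (0:ℝ) 1, 0 < a t)
    (hbound : ∀ t ∈ Ioc (0:ℝ) 1, t * |a' t| ≤ mua * a t)
    (hmua0 : 0 ≤ mua) (hmua2 : mua < 2)
    (hu2 : IntegrableOn (fun t => u t ^ 2) (Ioc 0 1))
    (hrepr : ∀ z ∈ Ioc (0:ℝ) 1, u 1 - u z = ∫ t in Ioc z 1, u' t)
    (hw2 : IntegrableOn (fun t => a t * u' t ^ 2) (Ioc 0 1))
    (hint : ∀ z ∈ Ioc (0:ℝ) 1, IntegrableOn u' (Ioc z 1)) :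
    (∫ t in Ioc (0:ℝ) 1, u t ^ 2) ≤ 2 * u 1 ^ 2 + (1 / a 1) * (2 / (2 - mua)) *
      ∫ t in Ioc (0:ℝ) 1, a t * u' t ^ 2 := by
  have ha1 : 0 < a 1 := hpos 1 ⟨zero_lt_one, le_refl 1⟩
  set c : ℝ := u 1 with hc
  set I : ℝ := ∫ t in Ioc (0:ℝ) 1, a t * u' t ^ 2 with hI
  have hI0 : 0 ≤ I := by
    refine setIntegral_nonneg measurableSet_Ioc (fun t ht => ?_)
    exact mul_nonneg (hpos t ht).le (sq_nonneg _)
  set K : ℝ := 2 * ((1 / a 1) * I) with hK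
  have hK0 : 0 ≤ K := by positivity
  set H : ℝ → ℝ := fun z => ∫ s in Ioc z 1, s ^ (-mua) with hH
  have hHnn : ∀ z, 0 < z → 0 ≤ H z := by
    intro z hz
    refine setIntegral_nonneg measurableSet_Ioc (fun s hs => ?_)
    exact Real.rpow_nonneg (le_of_lt (lt_trans hz hs.1)) _
  -- pointwise bound
  have hptw : ∀ z ∈ Ioc (0:ℝ) 1, u z ^ 2 ≤ 2 * c ^ 2 + K * H z := by
    intro z hz
    have hz0 : (0:ℝ) < z := hz.1
    set f : ℝ → ℝ := fun t => t ^ (-mua/2) with hf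
    set g : ℝ → ℝ := fun t => t ^ (mua/2) * u' t with hg
    have hrpowcont : ∀ r : ℝ, ContinuousOn (fun t : ℝ => t ^ r) (Ioc z 1) := by
      intro r t ht
      exact (Real.continuousAt_rpow_const t r
        (Or.inl (ne_of_gt (lt_trans hz0 ht.1)))).continuousWithinAt
    have hu'z : IntegrableOn u' (Ioc z 1) := hint z hz
    have hu'm : AEStronglyMeasurable u' (volume.restrict (Ioc z 1)) := hu'z.aestronglyMeasurable
    -- f² integrable
    have hf2 : IntegrableOn (fun t => f t ^ 2) (Ioc z 1) := by
      have h1 : IntegrableOn (fun t : ℝ => t ^ (-mua)) (Ioc z 1) := by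
        rw [← intervalIntegrable_iff_integrableOn_Ioc_of_le hz.2]
        refine ContinuousOn.intervalIntegrable_of_Icc hz.2 (fun t ht => ?_)
        exact (Real.continuousAt_rpow_const t (-mua)
          (Or.inl (ne_of_gt (lt_of_lt_of_le hz0 ht.1)))).continuousWithinAt
      refine h1.congr_fun (fun t ht => ?_) measurableSet_Ioc
      have ht0 : (0:ℝ) < t := lt_trans hz0 ht.1
      rw [hf]
      rw [← Real.rpow_natCast (t ^ (-mua/2)) 2, ← Real.rpow_mul ht0.le]
      norm_num
    have hfval : (∫ t in Ioc z 1, f t ^ 2) = H z := by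
      refine setIntegral_congr_fun measurableSet_Ioc (fun t ht => ?_)
      have ht0 : (0:ℝ) < t := lt_trans hz0 ht.1
      rw [hf, ← Real.rpow_natCast (t ^ (-mua/2)) 2, ← Real.rpow_mul ht0.le]
      norm_num
    -- g² integrable
    have hwmua := weighted hder hpos hbound hw2 hz0 hz.2 (le_refl mua) hu'z
    have hg2 : IntegrableOn (fun t => g t ^ 2) (Ioc z 1) := by
      refine hwmua.1.congr_fun (fun t ht => ?_) measurableSet_Ioc
      have ht0 : (0:ℝ) < t := lt_trans hz0 ht.1
      rw [hg]
      rw [mul_pow, ← Real.rpow_natCast (t ^ (mua/2)) 2, ← Real.rpow_mul ht0.le]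
      norm_num
    have hgval : (∫ t in Ioc z 1, g t ^ 2) = ∫ t in Ioc z 1, t ^ mua * u' t ^ 2 := by
      refine setIntegral_congr_fun measurableSet_Ioc (fun t ht => ?_)
      have ht0 : (0:ℝ) < t := lt_trans hz0 ht.1
      rw [hg, mul_pow, ← Real.rpow_natCast (t ^ (mua/2)) 2, ← Real.rpow_mul ht0.le]
      norm_num
    -- apply CS
    have hfm : AEStronglyMeasurable f (volume.restrict (Ioc z 1)) :=
      ((hrpowcont (-mua/2)).aestronglyMeasurable measurableSet_Ioc)
    have hgm : AEStronglyMeasurable g (volume.restrict (Ioc z 1)) :=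
      ((hrpowcont (mua/2)).aestronglyMeasurable measurableSet_Ioc).mul hu'm
    have hfLp : MemLp f 2 (volume.restrict (Ioc z 1)) :=
      (memLp_two_iff_integrable_sq hfm).mpr hf2
    have hgLp : MemLp g 2 (volume.restrict (Ioc z 1)) :=
      (memLp_two_iff_integrable_sq hgm).mpr hg2
    have hcs := cs2 hfLp hgLp
    have hfgeq : (∫ t in Ioc z 1, f t * g t) = ∫ t in Ioc z 1, u' t := by
      refine setIntegral_congr_fun measurableSet_Ioc (fun t ht => ?_)
      have ht0 : (0:ℝ) < t := lt_trans hz0 ht.1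
      rw [hf, hg, ← mul_assoc, ← Real.rpow_add ht0]
      have he : -mua/2 + mua/2 = 0 := by ring
      rw [he, Real.rpow_zero, one_mul]
    rw [hfgeq, hfval, hgval] at hcs
    -- numeric assembly
    have hW : (∫ t in Ioc z 1, t ^ mua * u' t ^ 2) ≤ (1 / a 1) * I := hwmua.2
    have hW0 : 0 ≤ ∫ t in Ioc z 1, t ^ mua * u' t ^ 2 := by
      rw [← hgval]
      exact setIntegral_nonneg measurableSet_Ioc (fun t ht => sq_nonneg _)
    have hH0 : 0 ≤ H z := hHnn z hz0
    have hsq : (∫ t in Ioc z 1, u' t) ^ 2 ≤ H z * ((1 / a 1) * I) := by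
      have h1 : |∫ t in Ioc z 1, u' t| ^ 2 ≤ (Real.sqrt (H z) * Real.sqrt (∫ t in Ioc z 1, t ^ mua * u' t ^ 2)) ^ 2 := by
        have := abs_nonneg (∫ t in Ioc z 1, u' t)
        nlinarith [hcs]
      rw [sq_abs, mul_pow, Real.sq_sqrt hH0, Real.sq_sqrt hW0] at h1
      nlinarith [hH0]
    have hurepr := hrepr z hz
    have : u z = c - ∫ t in Ioc z 1, u' t := by rw [hc]; linarith
    rw [this, hK]
    nlinarith [hsq, sq_nonneg (c + ∫ t in Ioc z 1, u' t)]
  -- integrate the pointwise bound on `Ioc y 1` and let `y → 0`.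
  have hs1mua : IntegrableOn (fun s : ℝ => s ^ (1 - mua)) (Ioc 0 1) := by
    rw [← intervalIntegrable_iff_integrableOn_Ioc_of_le zero_le_one]
    exact intervalIntegral.intervalIntegrable_rpow' (by linarith)
  have hval : (∫ s in Ioc (0:ℝ) 1, s ^ (1 - mua)) = 1 / (2 - mua) := by
    rw [← intervalIntegral.integral_of_le zero_le_one,
      integral_rpow (Or.inl (by linarith : (-1:ℝ) < 1 - mua))]
    rw [Real.one_rpow, Real.zero_rpow (by linarith : 1 - mua + 1 ≠ 0)]
    norm_num
    ring_nf
  have hbig : ∀ y : ℝ, 0 < y → y ≤ 1 →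
      (∫ t in Ioc y 1, u t ^ 2) ≤ 2 * c ^ 2 + K * (1 / (2 - mua)) := by
    intro y hy0 hy1
    have hsmua : IntegrableOn (fun s : ℝ => s ^ (-mua)) (Ioc y 1) := by
      rw [← intervalIntegrable_iff_integrableOn_Ioc_of_le hy1]
      refine ContinuousOn.intervalIntegrable_of_Icc hy1 (fun t ht => ?_)
      exact (Real.continuousAt_rpow_const t (-mua)
        (Or.inl (ne_of_gt (lt_of_lt_of_le hy0 ht.1)))).continuousWithinAt
    have hHcont : ContinuousOn H (Icc y 1) := cont_tail hy1 hsmua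
    have hRHSint : IntegrableOn (fun z => 2 * c ^ 2 + K * H z) (Ioc y 1) := by
      refine Integrable.add ((integrableOn_const_iff).mpr (Or.inr (by
        rw [Real.volume_Ioc]; exact ENNReal.ofReal_lt_top))) ?_
      exact (((hHcont.integrableOn_compact isCompact_Icc).mono_set
        Set.Ioc_subset_Icc_self).const_mul K)
    have step1 : (∫ t in Ioc y 1, u t ^ 2) ≤ ∫ z in Ioc y 1, (2 * c ^ 2 + K * H z) :=
      setIntegral_mono_on (hu2.mono_set (Set.Ioc_subset_Ioc_left hy0.le)) hRHSint
        measurableSet_Ioc (fun z hz => hptw z ⟨lt_trans hy0 hz.1, hz.2⟩)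
    have step2 : (∫ z in Ioc y 1, (2 * c ^ 2 + K * H z))
        = (volume (Ioc y 1)).toReal * (2 * c ^ 2) + K * ∫ z in Ioc y 1, H z := by
      rw [integral_add (show Integrable (fun _ : ℝ => 2 * c ^ 2) (volume.restrict (Ioc y 1)) from (integrableOn_const_iff (C := 2 * c ^ 2) (s := Ioc y 1) (μ := volume)).mpr (Or.inr (by
        rw [Real.volume_Ioc]; exact ENNReal.ofReal_lt_top)))
        (((hHcont.integrableOn_compact isCompact_Icc).mono_set
          Set.Ioc_subset_Icc_self).const_mul K), setIntegral_const, measureReal_def,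
        MeasureTheory.integral_const_mul, smul_eq_mul]
    have step3 : (∫ z in Ioc y 1, H z) ≤ 1 / (2 - mua) := by
      rw [hH, sw_aux hy1 hsmua]
      have hmono1 : (∫ s in Ioc y 1, (s - y) * s ^ (-mua)) ≤ ∫ s in Ioc y 1, s ^ (1 - mua) := by
        refine setIntegral_mono_on ?_ (hs1mua.mono_set (Set.Ioc_subset_Ioc_left hy0.le))
          measurableSet_Ioc (fun s hs => ?_)
        · rw [← intervalIntegrable_iff_integrableOn_Ioc_of_le hy1]
          refine ContinuousOn.intervalIntegrable_of_Icc hy1 (fun s hs => ?_)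
          exact ((continuous_id.sub continuous_const).continuousAt.continuousWithinAt).mul
            ((Real.continuousAt_rpow_const s (-mua)
              (Or.inl (ne_of_gt (lt_of_lt_of_le hy0 hs.1)))).continuousWithinAt)
        · have hs0 : (0:ℝ) < s := lt_trans hy0 hs.1
          have h1 : s ^ (1 - mua) = s * s ^ (-mua) := by
            rw [show (1:ℝ) - mua = 1 + (-mua) by ring, Real.rpow_add hs0, Real.rpow_one]
          rw [h1]
          have := Real.rpow_nonneg hs0.le (-mua)
          nlinarith [hs.1, hy0]
      have hmono2 : (∫ s in Ioc y 1, s ^ (1 - mua)) ≤ ∫ s in Ioc (0:ℝ) 1, s ^ (1 - mua) := by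
        refine setIntegral_mono_set hs1mua ?_
          (HasSubset.Subset.eventuallyLE (Set.Ioc_subset_Ioc_left hy0.le))
        refine (ae_restrict_iff' measurableSet_Ioc).mpr (Filter.Eventually.of_forall fun s hs => ?_)
        exact Real.rpow_nonneg hs.1.le _
      rw [hval] at hmono2
      linarith
    have hvol : (volume (Ioc y 1)).toReal ≤ 1 := by
      rw [Real.volume_Ioc, ENNReal.toReal_ofReal (by linarith)]
      linarith
    calc (∫ t in Ioc y 1, u t ^ 2) ≤ _ := step1
      _ = _ := step2
      _ ≤ 1 * (2 * c ^ 2) + K * (1 / (2 - mua)) := by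
          refine add_le_add (mul_le_mul_of_nonneg_right hvol (by positivity))
            (mul_le_mul_of_nonneg_left step3 hK0)
      _ = 2 * c ^ 2 + K * (1 / (2 - mua)) := by ring
  have hlim := lim_le hu2 hbig
  have heq : 2 * c ^ 2 + K * (1 / (2 - mua)) = 2 * c ^ 2 + 1 / a 1 * (2 / (2 - mua)) * I := by
    rw [hK]; ring
  linarith

-- continuity of the tail integral
lemma routeB {a a' u u' : ℝ → ℝ} {mua : ℝ}
    (hder : ∀ t ∈ Ioc (0:ℝ) 1, HasDerivAt a (a' t) t)
    (hpos : ∀ t ∈ Ioc (0:ℝ) 1, 0 < a t)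
    (hbound : ∀ t ∈ Ioc (0:ℝ) 1, t * |a' t| ≤ mua * a t)
    (hmua0 : 0 ≤ mua) (hmua2 : mua < 2)
    (hu2 : IntegrableOn (fun t => u t ^ 2) (Ioc 0 1))
    (hrepr : ∀ z ∈ Ioc (0:ℝ) 1, u 1 - u z = ∫ t in Ioc z 1, u' t)
    (hw2 : IntegrableOn (fun t => a t * u' t ^ 2) (Ioc 0 1))
    (hint : ∀ z ∈ Ioc (0:ℝ) 1, IntegrableOn u' (Ioc z 1)) :
    (∫ t in Ioc (0:ℝ) 1, u t ^ 2) ≤ 2 * u 1 ^ 2 + (1 / a 1) * 4 *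
      ∫ t in Ioc (0:ℝ) 1, a t * u' t ^ 2 := by
  have ha1 : 0 < a 1 := hpos 1 ⟨zero_lt_one, le_refl 1⟩
  set c : ℝ := u 1 with hc
  set I : ℝ := ∫ t in Ioc (0:ℝ) 1, a t * u' t ^ 2 with hI
  have hI0 : 0 ≤ I := by
    refine setIntegral_nonneg measurableSet_Ioc (fun t ht => ?_)
    exact mul_nonneg (hpos t ht).le (sq_nonneg _)
  have hbig : ∀ x : ℝ, 0 < x → x ≤ 1 →
      (∫ t in Ioc x 1, u t ^ 2) ≤ 2 * c ^ 2 + 4 * ((1 / a 1) * I) := by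
    intro x hx0 hx1
    have hxsub : Ioc x 1 ⊆ Ioc (0:ℝ) 1 := Set.Ioc_subset_Ioc_left hx0.le
    have hg : IntegrableOn u' (Ioc x 1) := hint x ⟨hx0, hx1⟩
    have hu'm : AEStronglyMeasurable u' (volume.restrict (Ioc x 1)) := hg.aestronglyMeasurable
    set G : ℝ → ℝ := fun t => ∫ s in Ioc t 1, u' s with hG
    have hGcont : ContinuousOn G (Icc x 1) := cont_tail hx1 hg
    obtain ⟨CG, hCG⟩ : ∃ C, ∀ t ∈ Icc x 1, ‖G t‖ ≤ C :=
      IsCompact.exists_bound_of_continuousOn isCompact_Icc hGcont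
    have hGm : AEStronglyMeasurable G (volume.restrict (Ioc x 1)) :=
      (hGcont.mono Set.Ioc_subset_Icc_self).aestronglyMeasurable measurableSet_Ioc
    have hGbd : ∀ᵐ t ∂(volume.restrict (Ioc x 1)), ‖G t‖ ≤ CG :=
      (ae_restrict_iff' measurableSet_Ioc).mpr
        (Filter.Eventually.of_forall fun t ht => hCG t (Set.Ioc_subset_Icc_self ht))
    have hu_eq : ∀ t ∈ Ioc x 1, u t = c - G t := by
      intro t ht
      have := hrepr t (hxsub ht)
      rw [hG]; linarith
    have hux : u x = c - G x := by
      have := hrepr x ⟨hx0, hx1⟩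
      rw [hG]; linarith
    -- integrability facts on T
    have hu2T : IntegrableOn (fun t => u t ^ 2) (Ioc x 1) := hu2.mono_set hxsub
    have hGg : IntegrableOn (fun t => G t * u' t) (Ioc x 1) :=
      Integrable.bdd_mul (c := CG) hg hGm hGbd
    have hG1 : IntegrableOn G (Ioc x 1) :=
      ((hGcont.integrableOn_compact isCompact_Icc).mono_set Set.Ioc_subset_Icc_self)
    have hG2 : IntegrableOn (fun t => G t ^ 2) (Ioc x 1) :=
      (((hGcont.pow 2).integrableOn_compact isCompact_Icc).mono_set Set.Ioc_subset_Icc_self)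
    have hid_bd : ∀ᵐ t ∂(volume.restrict (Ioc x 1)), ‖(t:ℝ)‖ ≤ 1 :=
      (ae_restrict_iff' measurableSet_Ioc).mpr
        (Filter.Eventually.of_forall fun t ht => by
          rw [Real.norm_eq_abs, abs_of_pos (lt_trans hx0 ht.1)]; exact ht.2)
    have htg : IntegrableOn (fun t => t * u' t) (Ioc x 1) :=
      Integrable.bdd_mul (c := 1) hg (continuous_id.aestronglyMeasurable) hid_bd
    have htGg : IntegrableOn (fun t => t * (G t * u' t)) (Ioc x 1) :=
      Integrable.bdd_mul (c := 1) hGg (continuous_id.aestronglyMeasurable) hid_bd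
    -- abbreviations
    set P : ℝ := ∫ t in Ioc x 1, u' t with hP
    set Q : ℝ := ∫ t in Ioc x 1, t * u' t with hQ
    set Sq : ℝ := ∫ t in Ioc x 1, t * (G t * u' t) with hSq
    set Aint : ℝ := ∫ t in Ioc x 1, u t ^ 2 with hAint
    -- identities
    have hS1 : (∫ t in Ioc x 1, G t) = Q - x * P := by
      rw [hG]
      rw [sw_aux hx1 hg]
      have : ∀ s ∈ Ioc x 1, (s - x) * u' s = s * u' s - x * u' s := by intro s _; ring
      rw [setIntegral_congr_fun measurableSet_Ioc this,
        integral_sub htg (hg.const_mul x), MeasureTheory.integral_const_mul, hQ, hP]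
    have hS2 : (∫ t in Ioc x 1, G t * u' t) = P ^ 2 / 2 := by
      rw [hG, hP]
      exact sy_aux hx1 hg
    have hS4 : (∫ t in Ioc x 1, G t ^ 2) = 2 * Sq - x * P ^ 2 := by
      have hS2t : ∀ t ∈ Ioc x 1, G t ^ 2 = 2 * ∫ s in Ioc t 1, G s * u' s := by
        intro t ht
        have h1 := sy_aux ht.2 (hg.mono_set (Set.Ioc_subset_Ioc_left ht.1.le))
        have h2 : (∫ s in Ioc t 1, (∫ r in Ioc s 1, u' r) * u' s)
            = ∫ s in Ioc t 1, G s * u' s := rfl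
        rw [h2] at h1
        rw [hG]
        linarith
      rw [setIntegral_congr_fun measurableSet_Ioc hS2t, MeasureTheory.integral_const_mul]
      have hsw := sw_aux hx1 hGg
      have h3 : (∫ t in Ioc x 1, ∫ s in Ioc t 1, G s * u' s)
          = ∫ s in Ioc x 1, (s - x) * (G s * u' s) := hsw
      rw [h3]
      have : ∀ s ∈ Ioc x 1, (s - x) * (G s * u' s)
          = s * (G s * u' s) - x * (G s * u' s) := by intro s _; ring
      rw [setIntegral_congr_fun measurableSet_Ioc this,
        integral_sub htGg (hGg.const_mul x), MeasureTheory.integral_const_mul, hSq]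
      rw [hS2]
      ring
    have hvol : (volume (Ioc x 1)).toReal = 1 - x := by
      rw [Real.volume_Ioc, ENNReal.toReal_ofReal (by linarith)]
    -- expansion of Aint
    have hAexp : Aint = (1 - x) * c ^ 2 - 2 * c * (Q - x * P) + (2 * Sq - x * P ^ 2) := by
      rw [hAint]
      have h1 : ∀ t ∈ Ioc x 1, u t ^ 2 = c ^ 2 - 2 * c * G t + G t ^ 2 := by
        intro t ht
        rw [hu_eq t ht]; ring
      have hconst : IntegrableOn (fun _ : ℝ => c ^ 2) (Ioc x 1) :=
        (integrableOn_const_iff).mpr (Or.inr (by rw [Real.volume_Ioc]; exact ENNReal.ofReal_lt_top))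
      have hint1 : Integrable (fun t => c ^ 2 - 2 * c * G t) (volume.restrict (Ioc x 1)) := by
        exact hconst.sub (hG1.const_mul (2*c))
      have h2 : ∀ t ∈ Ioc x 1, u t ^ 2 = (fun t => c ^ 2 - 2 * c * G t) t + (fun t => G t ^ 2) t := by
        intro t ht; simp only []; rw [hu_eq t ht]; ring
      rw [setIntegral_congr_fun measurableSet_Ioc h2]
      rw [integral_add hint1 hG2]
      rw [integral_sub hconst (hG1.const_mul (2*c)),
          setIntegral_const, measureReal_def, MeasureTheory.integral_const_mul, hS1, hS4, hvol, smul_eq_mul]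
    -- expansion of the cross term
    have hBexp : (∫ t in Ioc x 1, u t * (t * u' t)) = c * Q - Sq := by
      have h1 : ∀ t ∈ Ioc x 1, u t * (t * u' t) = c * (t * u' t) - t * (G t * u' t) := by
        intro t ht
        rw [hu_eq t ht]; ring
      rw [setIntegral_congr_fun measurableSet_Ioc h1,
        integral_sub (htg.const_mul c) htGg, MeasureTheory.integral_const_mul, hQ, hSq]
    -- IBP inequality
    have hibp : Aint + 2 * (c * Q - Sq) = c ^ 2 - x * u x ^ 2 := by
      rw [hAexp, hux]
      ring
    -- Cauchy-Schwarz on the cross term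
    set D : ℝ := ∫ t in Ioc x 1, (t * u' t) ^ 2 with hD
    have hwt := weighted hder hpos hbound hw2 hx0 hx1 hmua2.le hg
    have hDeq : D = ∫ t in Ioc x 1, t ^ (2:ℝ) * u' t ^ 2 := by
      rw [hD]
      refine setIntegral_congr_fun measurableSet_Ioc (fun t ht => ?_)
      rw [show ((2:ℝ)) = ((2:ℕ):ℝ) by norm_num, Real.rpow_natCast]
      ring
    have hDle : D ≤ (1 / a 1) * I := by rw [hDeq, hI]; exact hwt.2
    have hD0 : 0 ≤ D := by
      rw [hD]; exact setIntegral_nonneg measurableSet_Ioc (fun t ht => sq_nonneg _)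
    have hA0 : 0 ≤ Aint := by
      rw [hAint]; exact setIntegral_nonneg measurableSet_Ioc (fun t ht => sq_nonneg _)
    have hD2 : IntegrableOn (fun t => (t * u' t) ^ 2) (Ioc x 1) := by
      refine hwt.1.congr_fun (fun t ht => ?_) measurableSet_Ioc
      beta_reduce
      rw [show ((2:ℝ)) = ((2:ℕ):ℝ) by norm_num, Real.rpow_natCast]
      ring
    have huLp : MemLp u 2 (volume.restrict (Ioc x 1)) := by
      refine (memLp_two_iff_integrable_sq ?_).mpr hu2T
      have hcG : AEStronglyMeasurable (fun t : ℝ => c - G t) (volume.restrict (Ioc x 1)) := by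
        exact (aestronglyMeasurable_const (b := c)).sub hGm
      refine hcG.congr ?_
      refine (ae_restrict_iff' measurableSet_Ioc).mpr
        (Filter.Eventually.of_forall fun t ht => (hu_eq t ht).symm)
    have htgLp : MemLp (fun t => t * u' t) 2 (volume.restrict (Ioc x 1)) :=
      (memLp_two_iff_integrable_sq (continuous_id.aestronglyMeasurable.mul hu'm)).mpr hD2
    have hcs := cs2 huLp htgLp
    have hcs' : |∫ t in Ioc x 1, u t * (t * u' t)| ≤ Real.sqrt Aint * Real.sqrt D := by
      rw [hAint, hD]
      exact hcs
    rw [hBexp] at hcs'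
    -- conclude
    have hsqA := Real.sq_sqrt hA0
    have hsqD := Real.sq_sqrt hD0
    have key : Aint ≤ c ^ 2 + 2 * |c * Q - Sq| := by
      have h1 : -(2 * (c * Q - Sq)) ≤ 2 * |c * Q - Sq| := by
        have := neg_abs_le (c * Q - Sq); linarith
      have h2 : 0 ≤ x * u x ^ 2 := mul_nonneg hx0.le (sq_nonneg _)
      linarith
    have h3 : 2 * |c * Q - Sq| ≤ 2 * (Real.sqrt Aint * Real.sqrt D) := by linarith
    have h4 : 2 * (Real.sqrt Aint * Real.sqrt D) ≤ Aint / 2 + 2 * D := by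
      nlinarith [sq_nonneg (Real.sqrt Aint - 2 * Real.sqrt D)]
    have h5 : Aint ≤ 2 * c ^ 2 + 4 * D := by linarith
    have : Aint ≤ 2 * c ^ 2 + 4 * ((1 / a 1) * I) := by linarith
    rw [hAint] at this
    exact this
  have hlim := lim_le hu2 hbig
  have : 2 * c ^ 2 + 4 * ((1 / a 1) * I) = 2 * c ^ 2 + 1 / a 1 * 4 * I := by ring
  linarith

end HardyAux

/-- Hardy-type inequality (Proposition 2.2): for `u ∈ W_a^1(0,1)`,
`‖u‖²_{L²} ≤ 2 u(1)² + C_a' ∫ a |u'|²` with `C_a' = (1/a(1)) min{4, 2/(2-μ_a)}`. -/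
theorem stmt_7 (a a' : ℝ → ℝ) (mua : ℝ) (hdeg : DegHyp a a' mua) (hmua2 : mua < 2)
    (u u' : ℝ → ℝ) (hu : MemWa1 a mua u u') :
    (∫ x in Set.Ioc (0:ℝ) 1, u x ^ 2) ≤ 2 * u 1 ^ 2 +
      (1 / a 1) * min 4 (2 / (2 - mua)) *
        ∫ x in Set.Ioc (0:ℝ) 1, a x * u' x ^ 2 := by
  obtain ⟨haC, hder, ha'C, hpos, ha0, hmua0, hbnd⟩ := hdeg
  obtain ⟨⟨hu2, hrepr0, hw2⟩, -⟩ := hu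
  have ha1 : 0 < a 1 := hpos 1 ⟨zero_lt_one, le_refl 1⟩
  have h2m : (0:ℝ) < 2 - mua := by linarith
  have hone : (1:ℝ) ∈ Set.Ioc (0:ℝ) 1 := ⟨zero_lt_one, le_refl 1⟩
  have hrepr : ∀ z ∈ Set.Ioc (0:ℝ) 1, u 1 - u z = ∫ t in Set.Ioc z 1, u' t := by
    intro z hz
    have := hrepr0 z hz 1 hone
    rwa [intervalIntegral.integral_of_le hz.2] at this
  have hI0 : 0 ≤ ∫ x in Set.Ioc (0:ℝ) 1, a x * u' x ^ 2 := by
    refine setIntegral_nonneg measurableSet_Ioc (fun t ht => ?_)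
    exact mul_nonneg (hpos t ht).le (sq_nonneg _)
  have hmin0 : 0 ≤ min 4 (2 / (2 - mua)) :=
    le_min (by norm_num) (div_nonneg (by norm_num) h2m.le)
  by_cases hcase : ∀ z ∈ Set.Ioc (0:ℝ) 1, MeasureTheory.IntegrableOn u' (Set.Ioc z 1)
  · rcases le_or_gt (2 / (2 - mua)) 4 with hm | hm
    · rw [min_eq_right hm]
      exact routeA hder hpos hbnd hmua0 hmua2 hu2 hrepr hw2 hcase
    · rw [min_eq_left hm.le]
      exact routeB hder hpos hbnd hmua0 hmua2 hu2 hrepr hw2 hcase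
  · push_neg at hcase
    obtain ⟨z₀, hz₀, hni⟩ := hcase
    have hni1 : ¬ IntervalIntegrable u' volume z₀ 1 := by
      rwa [intervalIntegrable_iff_integrableOn_Ioc_of_le hz₀.2]
    have h01 : u 1 = u z₀ := by
      have h := hrepr0 z₀ hz₀ 1 hone
      rw [intervalIntegral.integral_undef hni1] at h
      linarith
    have hconst : ∀ y ∈ Set.Ioc (0:ℝ) 1, u y = u 1 := by
      intro y hy
      rcases le_or_gt y z₀ with hyz | hyz
      · have hniy : ¬ IntervalIntegrable u' volume y 1 := by
          intro hII
          exact hni1 (hII.mono_set (Set.uIcc_subset_uIcc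
            (Set.mem_uIcc.mpr (Or.inl ⟨hyz, hz₀.2⟩))
            (Set.mem_uIcc.mpr (Or.inl ⟨hy.2, le_refl 1⟩))))
        have h := hrepr0 y hy 1 hone
        rw [intervalIntegral.integral_undef hniy] at h
        linarith
      · by_cases hII : IntervalIntegrable u' volume z₀ y
        · have hniy : ¬ IntervalIntegrable u' volume y 1 := by
            intro hII2
            exact hni1 (hII.trans hII2)
          have h := hrepr0 y hy 1 hone
          rw [intervalIntegral.integral_undef hniy] at h
          linarith
        · have h := hrepr0 z₀ hz₀ y hy
          rw [intervalIntegral.integral_undef hII] at h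
          rw [h01]
          linarith
    have hJ : (∫ x in Set.Ioc (0:ℝ) 1, u x ^ 2) = u 1 ^ 2 := by
      have : ∀ y ∈ Set.Ioc (0:ℝ) 1, u y ^ 2 = (fun _ : ℝ => u 1 ^ 2) y := by
        intro y hy; rw [hconst y hy]
      rw [setIntegral_congr_fun measurableSet_Ioc this, setIntegral_const, measureReal_def,
        Real.volume_Ioc, smul_eq_mul]
      norm_num
    rw [hJ]
    have : 0 ≤ (1 / a 1) * min 4 (2 / (2 - mua)) *
        ∫ x in Set.Ioc (0:ℝ) 1, a x * u' x ^ 2 := by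
      refine mul_nonneg (mul_nonneg (one_div_nonneg.mpr ha1.le) hmin0) hI0
    nlinarith [sq_nonneg (u 1)]
end

section
/- Let $a$ satisfy the degeneracy hypotheses and $\beta>0$. For every $\lambda\in\mathbb{R}$, the variational problem $\int_0^1 a z'\varphi' dx + \beta a(1) z(1)\varphi(1) = \lambda a(1)\varphi(1)$ for all $\varphi\in W_a^1(0,1)$ admits a unique solution $z\in W_a^1(0,1)$, and it satisfies $\int_0^1 a|z'|^2 dx + \beta a(1) z^2(1) \le \frac{a(1)}{\beta}\lambda^2$ and $\|z\|_{L^2(0,1)}^2 \le \frac{a(1)}{\beta\alpha_a}\lambda^2$, where $\alpha_a = \min\{1/C_a', \beta a(1)/2\}$ and $C_a' = \frac{1}{a(1)}\min\{4,\frac{2}{2-\mu_a}\}$. -/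
open MeasureTheory Set Filter

section Aux

variable {a a' : ℝ → ℝ} {mua : ℝ}

lemma a_lower_s8 (hdeg : DegHyp a a' mua) {x : ℝ}
    (hx : x ∈ Set.Ioc (0:ℝ) 1) : a 1 * x ^ mua ≤ a x := by
  obtain ⟨hx0, hx1⟩ := hx
  set g : ℝ → ℝ := fun y => a y * y ^ (-mua) with hg
  have key : AntitoneOn g (Set.Icc x 1) := by
    apply antitoneOn_of_deriv_nonpos (convex_Icc x 1)
    · apply ContinuousOn.mul
      · exact hdeg.1.mono (fun y hy => ⟨le_of_lt (lt_of_lt_of_le hx0 hy.1), hy.2⟩)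
      · intro y hy
        exact (Real.continuousAt_rpow_const y (-mua)
          (Or.inl (ne_of_gt (lt_of_lt_of_le hx0 hy.1)))).continuousWithinAt
    · intro y hy
      rw [interior_Icc] at hy
      have hy0 : 0 < y := lt_trans hx0 hy.1
      have hmem : y ∈ Set.Ioc (0:ℝ) 1 := ⟨hy0, le_of_lt hy.2⟩
      have h1 : HasDerivAt a (a' y) y := hdeg.2.1 y hmem
      have h2 : HasDerivAt (fun t : ℝ => t ^ (-mua)) (-mua * y ^ (-mua - 1)) y :=
        Real.hasDerivAt_rpow_const (Or.inl (ne_of_gt hy0))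
      exact ((h1.mul h2).differentiableAt).differentiableWithinAt
    · intro y hy
      rw [interior_Icc] at hy
      have hy0 : 0 < y := lt_trans hx0 hy.1
      have hmem : y ∈ Set.Ioc (0:ℝ) 1 := ⟨hy0, le_of_lt hy.2⟩
      have h1 : HasDerivAt a (a' y) y := hdeg.2.1 y hmem
      have h2 : HasDerivAt (fun t : ℝ => t ^ (-mua)) (-mua * y ^ (-mua - 1)) y :=
        Real.hasDerivAt_rpow_const (Or.inl (ne_of_gt hy0))
      have hD : HasDerivAt g (a' y * y ^ (-mua) + a y * (-mua * y ^ (-mua - 1))) y := h1.mul h2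
      rw [hD.deriv]
      have hbound : y * a' y ≤ mua * a y :=
        le_trans (by nlinarith [le_abs_self (a' y), hx0]) (hdeg.2.2.2.2.2.2 y hmem)
      have hyp1 : (0:ℝ) < y ^ (-mua - 1) := Real.rpow_pos_of_pos hy0 _
      have hyp2 : y ^ (-mua) = y * y ^ (-mua - 1) := by
        have h := Real.rpow_add hy0 1 (-mua - 1)
        rw [Real.rpow_one, show (1:ℝ) + (-mua - 1) = -mua by ring] at h
        exact h
      rw [hyp2]
      nlinarith [mul_nonneg (sub_nonneg.2 hbound) hyp1.le]
  have h := key ⟨le_refl x, hx1⟩ ⟨hx1, le_refl 1⟩ hx1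
  have h1 : g 1 = a 1 := by simp [hg]
  have hxp : (0:ℝ) < x ^ mua := Real.rpow_pos_of_pos hx0 _
  have hgx : g x = a x * (x ^ mua)⁻¹ := by
    rw [hg]; simp [Real.rpow_neg (le_of_lt hx0)]
  rw [h1, hgx] at h
  calc a 1 * x ^ mua ≤ (a x * (x ^ mua)⁻¹) * x ^ mua := by
        apply mul_le_mul_of_nonneg_right h (le_of_lt hxp)
    _ = a x := by field_simp

lemma inv_integrable (ha1 : 0 < a 1) (ha : ∀ x ∈ Set.Ioc (0:ℝ) 1, 0 < a x)
    (hlow : ∀ x ∈ Set.Ioc (0:ℝ) 1, a 1 * x ^ mua ≤ a x)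
    (hcont : ContinuousOn a (Set.Icc 0 1)) (hmua1 : mua < 1) :
    IntegrableOn (fun x => (a x)⁻¹) (Set.Ioc 0 1) := by
  have hrpow : IntegrableOn (fun x : ℝ => (a 1)⁻¹ * x ^ (-mua)) (Set.Ioc 0 1) :=
    ((intervalIntegral.intervalIntegrable_rpow' (by linarith)).1).const_mul (a 1)⁻¹
  apply Integrable.mono' hrpow
  · exact ((hcont.mono Set.Ioc_subset_Icc_self).inv₀
      (fun x hx => ne_of_gt (ha x hx))).aestronglyMeasurable measurableSet_Ioc
  · filter_upwards [ae_restrict_mem measurableSet_Ioc] with x hx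
    have hax := ha x hx
    rw [Real.norm_eq_abs, abs_of_pos (inv_pos.2 hax), Real.rpow_neg hx.1.le, ← mul_inv]
    exact inv_anti₀ (mul_pos ha1 (Real.rpow_pos_of_pos hx.1 _)) (hlow x hx)

lemma ftc0 {φ φ' : ℝ → ℝ}
    (hFTC : ∀ x ∈ Set.Ioc (0:ℝ) 1, ∀ y ∈ Set.Ioc (0:ℝ) 1, φ y - φ x = ∫ t in x..y, φ' t)
    (hL2 : IntegrableOn (fun x => a x * φ' x ^ 2) (Set.Ioc 0 1))
    (h0 : Tendsto φ (nhdsWithin 0 (Set.Ioi 0)) (nhds 0))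
    (hinv : IntegrableOn (fun x => (a x)⁻¹) (Set.Ioc 0 1))
    (ha : ∀ x ∈ Set.Ioc (0:ℝ) 1, 0 < a x) :
    (IntegrableOn φ' (Set.Ioc 0 1) ∧ (∫ x in Set.Ioc (0:ℝ) 1, φ' x) = φ 1) ∨
    (¬ AEStronglyMeasurable φ' (volume.restrict (Set.Ioc 0 1)) ∧
      (∫ x in Set.Ioc (0:ℝ) 1, φ' x) = φ 1 ∧ φ 1 = 0) := by
  set u : ℕ → ℝ := fun n => ((n:ℝ)+2)⁻¹ with hu
  have hu_pos : ∀ n, 0 < u n := fun n => by positivity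
  have hu_le1 : ∀ n, u n ≤ 1 := fun n => by
    rw [hu]; rw [inv_le_one_iff₀]; right; linarith [Nat.cast_nonneg (α := ℝ) n]
  have hu_mem : ∀ n, u n ∈ Set.Ioc (0:ℝ) 1 := fun n => ⟨hu_pos n, hu_le1 n⟩
  have hu_anti : Antitone u := by
    intro n m hnm
    apply inv_anti₀ (by positivity)
    exact add_le_add_left (Nat.cast_le.2 hnm) 2
  have hu_tendsto : Tendsto u atTop (nhds 0) := by
    apply Filter.Tendsto.inv_tendsto_atTop
    exact tendsto_atTop_add_const_right atTop 2 tendsto_natCast_atTop_atTop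
  have hu_tendsto' : Tendsto u atTop (nhdsWithin 0 (Set.Ioi 0)) :=
    tendsto_nhdsWithin_iff.2 ⟨hu_tendsto, Filter.Eventually.of_forall hu_pos⟩
  have hs_mono : Monotone (fun n => Set.Ioc (u n) 1) :=
    fun n m hnm => Set.Ioc_subset_Ioc_left (hu_anti hnm)
  have hs_union : (⋃ n, Set.Ioc (u n) 1) = Set.Ioc (0:ℝ) 1 := by
    ext x
    simp only [Set.mem_iUnion, Set.mem_Ioc]
    constructor
    · rintro ⟨n, hn1, hn2⟩; exact ⟨lt_trans (hu_pos n) hn1, hn2⟩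
    · rintro ⟨hx0, hx1⟩
      obtain ⟨n, hn⟩ := (hu_tendsto.eventually_lt_const hx0).exists
      exact ⟨n, hn, hx1⟩
  have hFTC' : ∀ n, (∫ x in Set.Ioc (u n) 1, φ' x) = φ 1 - φ (u n) := by
    intro n
    rw [hFTC (u n) (hu_mem n) 1 ⟨zero_lt_one, le_refl 1⟩,
      intervalIntegral.integral_of_le (hu_le1 n)]
  have hφu : Tendsto (fun n => φ (u n)) atTop (nhds 0) := h0.comp hu_tendsto'
  have hlim : Tendsto (fun n => ∫ x in Set.Ioc (u n) 1, φ' x) atTop (nhds (φ 1)) := by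
    have : Tendsto (fun n => φ 1 - φ (u n)) atTop (nhds (φ 1 - 0)) :=
      tendsto_const_nhds.sub hφu
    rw [sub_zero] at this
    exact this.congr (fun n => (hFTC' n).symm)
  by_cases hm : AEStronglyMeasurable φ' (volume.restrict (Set.Ioc 0 1))
  · left
    have hbd : IntegrableOn (fun x => (a x * φ' x ^ 2 + (a x)⁻¹)/2) (Set.Ioc 0 1) :=
      (hL2.add hinv).div_const 2
    have hint : IntegrableOn φ' (Set.Ioc 0 1) := by
      apply Integrable.mono' hbd hm
      filter_upwards [ae_restrict_mem measurableSet_Ioc] with x hx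
      have hax := ha x hx
      have hs0 : 0 < Real.sqrt (a x) := Real.sqrt_pos.2 hax
      have hs1 : Real.sqrt (a x) ^ 2 = a x := Real.sq_sqrt hax.le
      have hs2 : Real.sqrt (a x) * (Real.sqrt (a x))⁻¹ = 1 := mul_inv_cancel₀ (ne_of_gt hs0)
      have hsabs : |φ' x| ^ 2 = φ' x ^ 2 := sq_abs _
      rw [Real.norm_eq_abs]
      have hinv2 : ((Real.sqrt (a x))⁻¹) ^ 2 = (a x)⁻¹ := by
        rw [inv_pow, hs1]
      nlinarith [sq_nonneg (Real.sqrt (a x) * |φ' x| - (Real.sqrt (a x))⁻¹), abs_nonneg (φ' x)]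
    refine ⟨hint, ?_⟩
    have h2 : Tendsto (fun n => ∫ x in Set.Ioc (u n) 1, φ' x) atTop
        (nhds (∫ x in Set.Ioc (0:ℝ) 1, φ' x)) := by
      have := tendsto_setIntegral_of_monotone (fun n => measurableSet_Ioc) hs_mono
        (by rw [hs_union]; exact hint)
      rwa [hs_union] at this
    exact tendsto_nhds_unique h2 hlim
  · right
    have hI0 : (∫ x in Set.Ioc (0:ℝ) 1, φ' x) = 0 := integral_non_aestronglyMeasurable hm
    have hx0 : ∃ n0, ¬ AEStronglyMeasurable φ' (volume.restrict (Set.Ioc (u n0) 1)) := by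
      by_contra hall
      push_neg at hall
      have : AEMeasurable φ' (volume.restrict (⋃ n, Set.Ioc (u n) 1)) :=
        aemeasurable_iUnion_iff.2 (fun n => (hall n).aemeasurable)
      rw [hs_union] at this
      exact hm this.aestronglyMeasurable
    obtain ⟨n0, hn0⟩ := hx0
    have hev : ∀ n, n0 ≤ n → φ (u n) = φ 1 := by
      intro n hn
      have hsub : Set.Ioc (u n0) 1 ⊆ Set.Ioc (u n) 1 := hs_mono hn
      have hnm : ¬ AEStronglyMeasurable φ' (volume.restrict (Set.Ioc (u n) 1)) :=
        fun h => hn0 (h.mono_measure (Measure.restrict_mono hsub le_rfl))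
      have := hFTC' n
      rw [integral_non_aestronglyMeasurable hnm] at this
      linarith [this]
    have hφ1 : φ 1 = 0 := by
      have h1 : Tendsto (fun _ : ℕ => φ 1) atTop (nhds 0) := by
        apply hφu.congr'
        filter_upwards [eventually_ge_atTop n0] with n hn
        exact hev n hn
      exact tendsto_nhds_unique tendsto_const_nhds h1
    exact ⟨hm, by rw [hI0, hφ1], hφ1⟩

end Aux

set_option maxHeartbeats 2000000 in
/-- Proposition 2.3: for `β > 0` and any `λ ∈ ℝ`, the variational problem admits a
unique solution `z ∈ W_a^1(0,1)`, satisfying the elliptic estimates (1729). -/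
theorem stmt_8 (a a' : ℝ → ℝ) (mua : ℝ) (hdeg : DegHyp a a' mua) (hmua2 : mua < 2)
    (β lam : ℝ) (hβ : 0 < β) :
    ∃ z z' : ℝ → ℝ, MemWa1 a mua z z' ∧
      (∀ φ φ' : ℝ → ℝ, MemWa1 a mua φ φ' →
        (∫ x in Set.Ioc (0:ℝ) 1, a x * z' x * φ' x) + β * a 1 * z 1 * φ 1
          = lam * a 1 * φ 1) ∧
      (∫ x in Set.Ioc (0:ℝ) 1, a x * z' x ^ 2) + β * a 1 * z 1 ^ 2 ≤ a 1 / β * lam ^ 2 ∧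
      (∫ x in Set.Ioc (0:ℝ) 1, z x ^ 2) ≤
        a 1 / (β * min (1 / ((1 / a 1) * min 4 (2 / (2 - mua)))) (β * a 1 / 2)) * lam ^ 2 ∧
      (∀ z2 z2' : ℝ → ℝ, MemWa1 a mua z2 z2' →
        (∀ φ φ' : ℝ → ℝ, MemWa1 a mua φ φ' →
          (∫ x in Set.Ioc (0:ℝ) 1, a x * z2' x * φ' x) + β * a 1 * z2 1 * φ 1
            = lam * a 1 * φ 1) →
        ∀ x ∈ Set.Ioc (0:ℝ) 1, z2 x = z x) := by
  have ha : ∀ x ∈ Set.Ioc (0:ℝ) 1, 0 < a x := hdeg.2.2.2.1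
  have hA1 : 0 < a 1 := ha 1 ⟨one_pos, le_refl 1⟩
  have hmua0 : 0 ≤ mua := hdeg.2.2.2.2.2.1
  -- positivity of the constant in the L² estimate, and the generic bound
  set αm : ℝ := min (1 / ((1 / a 1) * min 4 (2 / (2 - mua)))) (β * a 1 / 2) with hαm
  have hCpos : 0 < (1 / a 1) * min 4 (2 / (2 - mua)) := by
    apply mul_pos (by positivity)
    apply lt_min (by norm_num)
    have : 0 < 2 - mua := by linarith
    positivity
  have hαpos : 0 < αm := lt_min (by positivity) (by positivity)
  have hα2 : αm ≤ β * a 1 / 2 := min_le_right _ _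
  have hkey2 : lam ^ 2 / β ^ 2 ≤ a 1 / (β * αm) * lam ^ 2 := by
    have h1 : β * αm ≤ β * (β * a 1 / 2) := by nlinarith
    have h2 : a 1 / (β * (β * a 1 / 2)) ≤ a 1 / (β * αm) :=
      div_le_div_of_nonneg_left hA1.le (by positivity) h1
    have h3 : a 1 / (β * (β * a 1 / 2)) = 2 / β ^ 2 := by
      field_simp
    have h4 : (1:ℝ) / β ^ 2 ≤ a 1 / (β * αm) := by
      calc (1:ℝ)/β^2 ≤ 2/β^2 := by gcongr <;> norm_num
        _ = a 1 / (β * (β * a 1 / 2)) := h3.symm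
        _ ≤ _ := h2
    calc lam ^ 2 / β ^ 2 = (1/β^2) * lam^2 := by ring
      _ ≤ a 1 / (β * αm) * lam ^ 2 := mul_le_mul_of_nonneg_right h4 (sq_nonneg lam)
  by_cases hmua1 : mua < 1
  case neg =>
    -- constant solution
    refine ⟨fun _ => lam / β, fun _ => 0, ⟨⟨?_, ?_, ?_⟩, fun h => absurd h hmua1⟩, ?_, ?_, ?_, ?_⟩
    · exact integrableOn_const (C := (lam/β)^2) measure_Ioc_lt_top.ne
    · intro x _ y _; simp
    · have h : (fun x => a x * (0:ℝ) ^ 2) = fun _ => (0:ℝ) := by funext x; ring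
      rw [h]; exact integrableOn_zero
    · intro φ φ' hφ
      have h : (fun x => a x * (0:ℝ) * φ' x) = fun _ => (0:ℝ) := by funext x; ring
      rw [h, integral_zero]
      field_simp
      ring
    · have h : (fun x => a x * (0:ℝ) ^ 2) = fun _ => (0:ℝ) := by funext x; ring
      rw [h, integral_zero]
      apply le_of_eq
      field_simp
      ring
    · rw [setIntegral_const]
      rw [Real.volume_real_Ioc_of_le zero_le_one]
      norm_num
      calc (lam/β)^2 = lam^2/β^2 := by ring
        _ ≤ _ := hkey2
    · -- uniqueness for the constant solution
      intro z2 z2' hz2 hz2var x hx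
      have ht1 := hz2var z2 z2' hz2
      have hrw1 : (fun x => a x * z2' x * z2' x) = fun x => a x * z2' x ^ 2 := by
        funext y; ring
      rw [show (∫ x in Set.Ioc (0:ℝ) 1, a x * z2' x * z2' x)
          = ∫ x in Set.Ioc (0:ℝ) 1, a x * z2' x ^ 2 from by rw [hrw1]] at ht1
      have ht2 := hz2var (fun _ => lam / β) (fun _ => 0)
        ⟨⟨integrableOn_const (C := (lam/β)^2) measure_Ioc_lt_top.ne,
          fun x _ y _ => by simp,
          by rw [show (fun x => a x * (0:ℝ) ^ 2) = fun _ => (0:ℝ) from by funext y; ring]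
             exact integrableOn_zero⟩, fun h => absurd h hmua1⟩
      rw [show (fun x => a x * z2' x * (0:ℝ)) = fun _ => (0:ℝ) from by funext y; ring,
        integral_zero] at ht2
      set E := ∫ x in Set.Ioc (0:ℝ) 1, a x * z2' x ^ 2 with hE
      set t := z2 1 with htdef
      have hE0 : 0 ≤ E :=
        setIntegral_nonneg measurableSet_Ioc (fun y hy => mul_nonneg (ha y hy).le (sq_nonneg _))
      -- from ht2 : 0 + β * a 1 * t * (lam/β) = lam * a 1 * (lam/β)
      have htlam : a 1 * (lam * t) = a 1 * (lam ^ 2 / β) := by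
        calc a 1 * (lam * t) = β * a 1 * t * (lam/β) := by field_simp
          _ = lam * a 1 * (lam/β) := by linarith [ht2]
          _ = a 1 * (lam^2/β) := by field_simp
      have hiden : E + β * a 1 * (t - lam/β)^2 = 0 := by
        have hexp : β * a 1 * (t - lam/β)^2
            = β * a 1 * t^2 - 2 * (a 1 * (lam * t)) + a 1 * (lam^2/β) := by
          field_simp; ring
        rw [hexp, htlam]
        linarith [ht1]
      have hEzero : E = 0 := by nlinarith [sq_nonneg (t - lam/β), mul_pos hβ hA1]
      have htval : t = lam / β := by
        have h0 : β * a 1 * (t - lam/β)^2 = 0 := by linarith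
        have h2 : (t - lam/β)^2 = 0 := by
          rcases mul_eq_zero.1 h0 with h | h
          · exact absurd h (ne_of_gt (mul_pos hβ hA1))
          · exact h
        have h3 := pow_eq_zero_iff (n := 2) two_ne_zero |>.1 h2
        linarith [h3]
      -- z2' = 0 a.e., hence z2 constant
      have hae : ∀ᵐ y ∂(volume.restrict (Set.Ioc (0:ℝ) 1)), z2' y = 0 := by
        have hzero : (fun y => a y * z2' y ^ 2) =ᵐ[volume.restrict (Set.Ioc (0:ℝ) 1)] 0 := by
          apply (integral_eq_zero_iff_of_nonneg_ae ?_ hz2.1.2.2).1 hEzero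
          filter_upwards [ae_restrict_mem measurableSet_Ioc] with y hy
          exact mul_nonneg (ha y hy).le (sq_nonneg _)
        filter_upwards [hzero, ae_restrict_mem measurableSet_Ioc] with y h1 h2
        have : a y * z2' y ^ 2 = 0 := h1
        have := (mul_eq_zero.1 this).resolve_left (ne_of_gt (ha y h2))
        exact pow_eq_zero_iff (n := 2) (by norm_num) |>.1 this
      have hconst : z2 x = z2 1 := by
        have hFTCz2 := hz2.1.2.1 x hx 1 ⟨one_pos, le_refl 1⟩
        rw [intervalIntegral.integral_of_le hx.2] at hFTCz2
        have hae2 : ∀ᵐ y ∂(volume.restrict (Set.Ioc x 1)), z2' y = 0 :=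
          ae_restrict_of_ae_restrict_of_subset
            (Set.Ioc_subset_Ioc_left hx.1.le) hae
        have : (∫ y in Set.Ioc x 1, z2' y) = 0 :=
          integral_eq_zero_of_ae hae2
        linarith [hFTCz2, this]
      rw [hconst, ← htdef, htval]
  case pos =>
    have hlow : ∀ x ∈ Set.Ioc (0:ℝ) 1, a 1 * x ^ mua ≤ a x := fun x hx => a_lower_s8 hdeg hx
    have hinv : IntegrableOn (fun x => (a x)⁻¹) (Set.Ioc 0 1) :=
      inv_integrable hA1 ha hlow hdeg.1 hmua1
    set fI : ℝ → ℝ := (Set.Ioc (0:ℝ) 1).indicator (fun t => (a t)⁻¹) with hfIdef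
    have hfI_int : Integrable fI := (integrable_indicator_iff measurableSet_Ioc).2 hinv
    have hfI_nonneg : ∀ t, 0 ≤ fI t :=
      fun t => Set.indicator_nonneg (fun s hs => inv_nonneg.2 (ha s hs).le) t
    have hfI_eq : ∀ t ∈ Set.Ioc (0:ℝ) 1, fI t = (a t)⁻¹ :=
      fun t ht => Set.indicator_of_mem ht _
    have hA_mono : Monotone (fun x => ∫ t in Set.Ioc 0 x, fI t) := by
      intro x y hxy
      exact setIntegral_mono_set hfI_int.integrableOn
        (Filter.Eventually.of_forall hfI_nonneg)
        ((Set.Ioc_subset_Ioc_right hxy).eventuallyLE)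
    have hA_diff : ∀ x y : ℝ, 0 ≤ x → x ≤ y →
        (∫ t in Set.Ioc 0 y, fI t) - (∫ t in Set.Ioc 0 x, fI t) = ∫ t in Set.Ioc x y, fI t := by
      intro x y hx hxy
      have hu : Set.Ioc (0:ℝ) x ∪ Set.Ioc x y = Set.Ioc 0 y := Set.Ioc_union_Ioc_eq_Ioc hx hxy
      rw [← hu, setIntegral_union (Set.Ioc_disjoint_Ioc_of_le le_rfl) measurableSet_Ioc
        hfI_int.integrableOn hfI_int.integrableOn]
      ring
    have hA_nonneg : ∀ x : ℝ, 0 ≤ ∫ t in Set.Ioc 0 x, fI t :=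
      fun x => setIntegral_nonneg measurableSet_Ioc (fun t _ => hfI_nonneg t)
    have hrpow : IntegrableOn (fun x : ℝ => (a 1)⁻¹ * x ^ (-mua)) (Set.Ioc 0 1) :=
      ((intervalIntegral.intervalIntegrable_rpow' (by linarith)).1).const_mul (a 1)⁻¹
    have hptws : ∀ t ∈ Set.Ioc (0:ℝ) 1, fI t ≤ (a 1)⁻¹ * t ^ (-mua) := by
      intro t ht
      rw [hfI_eq t ht, Real.rpow_neg ht.1.le, ← mul_inv]
      exact inv_anti₀ (mul_pos hA1 (Real.rpow_pos_of_pos ht.1 _)) (hlow t ht)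
    have hA_bound : ∀ x ∈ Set.Ioc (0:ℝ) 1,
        (∫ t in Set.Ioc 0 x, fI t) ≤ ((a 1)⁻¹ / (1 - mua)) * x ^ (1 - mua) := by
      intro x hx
      have h1 : (∫ t in Set.Ioc 0 x, fI t) ≤ ∫ t in Set.Ioc 0 x, (a 1)⁻¹ * t ^ (-mua) := by
        apply setIntegral_mono_on hfI_int.integrableOn
          (hrpow.mono_set (Set.Ioc_subset_Ioc_right hx.2)) measurableSet_Ioc
        exact fun t ht => hptws t ⟨ht.1, le_trans ht.2 hx.2⟩
      have h2 : (∫ t in Set.Ioc 0 x, (a 1)⁻¹ * t ^ (-mua))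
          = ((a 1)⁻¹ / (1 - mua)) * x ^ (1 - mua) := by
        rw [← intervalIntegral.integral_of_le hx.1.le, intervalIntegral.integral_const_mul,
          integral_rpow (Or.inl (by linarith))]
        rw [Real.zero_rpow (by intro h; linarith [h] : -mua + 1 ≠ 0)]
        rw [show -mua + 1 = 1 - mua by ring]
        field_simp
        rw [sub_zero]
      linarith
    have hA_tendsto : Tendsto (fun x => ∫ t in Set.Ioc 0 x, fI t)
        (nhdsWithin 0 (Set.Ioi 0)) (nhds 0) := by
      have hg : Tendsto (fun x : ℝ => ((a 1)⁻¹ / (1 - mua)) * x ^ (1 - mua))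
          (nhdsWithin 0 (Set.Ioi 0)) (nhds 0) := by
        have hc : ContinuousAt (fun x : ℝ => x ^ (1 - mua)) 0 :=
          Real.continuousAt_rpow_const 0 (1 - mua) (Or.inr (by linarith))
        have h0 : Tendsto (fun x : ℝ => x ^ (1 - mua)) (nhdsWithin 0 (Set.Ioi 0))
            (nhds ((0:ℝ) ^ (1 - mua))) := hc.tendsto.mono_left nhdsWithin_le_nhds
        have := h0.const_mul ((a 1)⁻¹ / (1 - mua))
        rw [Real.zero_rpow (by intro h; linarith [h] : (1:ℝ) - mua ≠ 0), mul_zero] at this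
        exact this
      apply squeeze_zero' ?_ ?_ hg
      · exact Filter.Eventually.of_forall (fun x => hA_nonneg x)
      · filter_upwards [Ioc_mem_nhdsGT_of_mem (Set.left_mem_Ico.2 zero_lt_one)] with x hx
        exact hA_bound x hx
    -- the solution
    set AA : ℝ := ∫ t in Set.Ioc (0:ℝ) 1, fI t with hAAdef
    have hAA0 : 0 ≤ AA := hA_nonneg 1
    have hD : 0 < 1 + β * a 1 * AA := by
      have : 0 ≤ β * a 1 * AA := mul_nonneg (mul_nonneg hβ.le hA1.le) hAA0
      linarith
    set c : ℝ := lam * a 1 / (1 + β * a 1 * AA) with hcdef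
    have hcD : c * (1 + β * a 1 * AA) = lam * a 1 := by
      rw [hcdef]; field_simp
    set z : ℝ → ℝ := fun x => c * ∫ t in Set.Ioc (0:ℝ) x, fI t with hzdef
    set z' : ℝ → ℝ := fun x => c * fI x with hz'def
    have hz1 : z 1 = c * AA := rfl
    have hAAeq : (∫ y in Set.Ioc (0:ℝ) 1, (a y)⁻¹) = AA := by
      rw [hAAdef]
      exact (setIntegral_congr_fun measurableSet_Ioc (fun t ht => hfI_eq t ht)).symm
    -- membership
    have hmemz : MemWa1 a mua z z' := by
      refine ⟨⟨?_, ?_, ?_⟩, fun _ => ?_⟩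
      · have hmeas : Measurable fun x => z x ^ 2 :=
          ((hA_mono.measurable).const_mul c).pow_const 2
        apply Integrable.mono'
          (integrableOn_const (C := c^2*AA^2) measure_Ioc_lt_top.ne)
          (hmeas.aestronglyMeasurable.restrict)
        filter_upwards [ae_restrict_mem measurableSet_Ioc] with x hx
        have h1 : (∫ t in Set.Ioc (0:ℝ) x, fI t) ≤ AA := hA_mono hx.2
        have h2 : 0 ≤ ∫ t in Set.Ioc (0:ℝ) x, fI t := hA_nonneg x
        rw [Real.norm_eq_abs, abs_of_nonneg (sq_nonneg _)]
        have h3 : (∫ t in Set.Ioc (0:ℝ) x, fI t)^2 ≤ AA^2 := pow_le_pow_left₀ h2 h1 2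
        show (c * ∫ t in Set.Ioc (0:ℝ) x, fI t)^2 ≤ c^2*AA^2
        rw [mul_pow]
        nlinarith [sq_nonneg c]
      · intro x hx y hy
        rcases le_total x y with hxy | hxy
        · rw [intervalIntegral.integral_of_le hxy]
          show c * _ - c * _ = _
          rw [MeasureTheory.integral_const_mul, ← hA_diff x y hx.1.le hxy]
          ring
        · rw [intervalIntegral.integral_symm, intervalIntegral.integral_of_le hxy]
          show c * _ - c * _ = _
          rw [MeasureTheory.integral_const_mul, ← hA_diff y x hy.1.le hxy]
          ring
      · apply MeasureTheory.IntegrableOn.congr_fun (hinv.const_mul (c^2)) ?_ measurableSet_Ioc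
        intro y hy
        show c^2 * (a y)⁻¹ = a y * (c * fI y)^2
        rw [hfI_eq y hy]
        field_simp [(ha y hy).ne']
      · have := hA_tendsto.const_mul c
        rw [mul_zero] at this
        exact this
    -- variational identity
    have hvar : ∀ φ φ' : ℝ → ℝ, MemWa1 a mua φ φ' →
        (∫ x in Set.Ioc (0:ℝ) 1, a x * z' x * φ' x) + β * a 1 * z 1 * φ 1
          = lam * a 1 * φ 1 := by
      intro φ φ' hφ
      have hstep : (∫ x in Set.Ioc (0:ℝ) 1, a x * z' x * φ' x)
          = c * ∫ x in Set.Ioc (0:ℝ) 1, φ' x := by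
        rw [← MeasureTheory.integral_const_mul]
        apply setIntegral_congr_fun measurableSet_Ioc
        intro y hy
        show a y * (c * fI y) * φ' y = c * φ' y
        rw [hfI_eq y hy]
        field_simp [(ha y hy).ne']
      have hphi1 : (∫ x in Set.Ioc (0:ℝ) 1, φ' x) = φ 1 := by
        rcases ftc0 hφ.1.2.1 hφ.1.2.2 (hφ.2 hmua1) hinv ha with h | h
        · exact h.2
        · exact h.2.1
      rw [hstep, hphi1, hz1]
      linear_combination φ 1 * hcD
    -- energy computation
    have hEz : (∫ x in Set.Ioc (0:ℝ) 1, a x * z' x ^ 2) = c^2 * AA := by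
      rw [hAAdef, ← MeasureTheory.integral_const_mul]
      apply setIntegral_congr_fun measurableSet_Ioc
      intro y hy
      show a y * (c * fI y)^2 = c^2 * fI y
      rw [hfI_eq y hy]
      field_simp [(ha y hy).ne']
    have hsq : (c * (1 + β * a 1 * AA))^2 = (lam * a 1)^2 := by rw [hcD]
    have hpoly : c^2*AA + β * a 1 * (c*AA)^2 ≤ a 1 / β * lam ^ 2 := by
      have h5 : a 1 * ((c^2*AA + β * a 1 * (c*AA)^2) * β) ≤ a 1 * (a 1 * lam^2) := by
        nlinarith [hsq, sq_nonneg c,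
          mul_nonneg (mul_nonneg (mul_nonneg hβ.le hA1.le) hAA0) (sq_nonneg c)]
      have h6 : (c^2*AA + β * a 1 * (c*AA)^2) * β ≤ a 1 * lam^2 :=
        le_of_mul_le_mul_left h5 hA1
      have h7 := (le_div_iff₀ hβ).2 h6
      calc c^2*AA + β * a 1 * (c*AA)^2 ≤ a 1 * lam^2 / β := h7
        _ = a 1 / β * lam ^ 2 := by ring
    have hest1 : (∫ x in Set.Ioc (0:ℝ) 1, a x * z' x ^ 2) + β * a 1 * z 1 ^ 2
        ≤ a 1 / β * lam ^ 2 := by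
      rw [hEz, hz1]
      exact hpoly
    refine ⟨z, z', hmemz, hvar, hest1, ?_, ?_⟩
    · -- L² estimate
      have hcAA0 : 0 ≤ c^2*AA := mul_nonneg (sq_nonneg c) hAA0
      have hb : β * a 1 * (c*AA)^2 ≤ a 1 / β * lam^2 := by linarith [hpoly]
      have hs1sq : (c*AA)^2 ≤ lam^2/β^2 := by
        rw [le_div_iff₀ (show (0:ℝ) < β^2 by positivity)]
        have h7 := mul_le_mul_of_nonneg_left hb hβ.le
        have h8 : β * (a 1 / β * lam^2) = a 1 * lam^2 := by field_simp
        nlinarith [h7, h8, hA1]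
      have hzsq : (∫ x in Set.Ioc (0:ℝ) 1, z x ^ 2) ≤ (c*AA)^2 := by
        have hle : ∀ x ∈ Set.Ioc (0:ℝ) 1, z x ^ 2 ≤ (c*AA)^2 := by
          intro x hx
          have h1 : (∫ t in Set.Ioc (0:ℝ) x, fI t) ≤ AA := hA_mono hx.2
          have h2 : 0 ≤ ∫ t in Set.Ioc (0:ℝ) x, fI t := hA_nonneg x
          have h3 : (∫ t in Set.Ioc (0:ℝ) x, fI t)^2 ≤ AA^2 := pow_le_pow_left₀ h2 h1 2
          show (c * ∫ t in Set.Ioc (0:ℝ) x, fI t)^2 ≤ (c*AA)^2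
          rw [mul_pow, mul_pow]
          nlinarith [sq_nonneg c]
        calc (∫ x in Set.Ioc (0:ℝ) 1, z x ^ 2)
            ≤ ∫ _x in Set.Ioc (0:ℝ) 1, (c*AA)^2 := by
              apply setIntegral_mono_on hmemz.1.1
                (integrableOn_const (C := (c*AA)^2) measure_Ioc_lt_top.ne)
                measurableSet_Ioc hle
          _ = (c*AA)^2 := by
              rw [setIntegral_const, Real.volume_real_Ioc_of_le zero_le_one]
              norm_num
      calc (∫ x in Set.Ioc (0:ℝ) 1, z x ^ 2) ≤ (c*AA)^2 := hzsq
        _ ≤ lam^2/β^2 := hs1sq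
        _ ≤ a 1 / (β * αm) * lam ^ 2 := hkey2
    · -- uniqueness
      intro z2 z2' hz2 hz2var x hx
      have hrw1 : (fun y => a y * z2' y * z2' y) = fun y => a y * z2' y ^ 2 := by
        funext y; ring
      have ht1 := hz2var z2 z2' hz2
      rw [show (∫ y in Set.Ioc (0:ℝ) 1, a y * z2' y * z2' y)
          = ∫ y in Set.Ioc (0:ℝ) 1, a y * z2' y ^ 2 from by rw [hrw1]] at ht1
      have hE20 : 0 ≤ ∫ y in Set.Ioc (0:ℝ) 1, a y * z2' y ^ 2 :=
        setIntegral_nonneg measurableSet_Ioc (fun y hy => mul_nonneg (ha y hy).le (sq_nonneg _))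
      by_cases hm : AEStronglyMeasurable z2' (volume.restrict (Set.Ioc (0:ℝ) 1))
      · -- good case
        obtain ⟨hz2int, hz2I⟩ :=
          (ftc0 hz2.1.2.1 hz2.1.2.2 (hz2.2 hmua1) hinv ha).resolve_right (fun h => h.1 hm)
        have hcross1 : (∫ y in Set.Ioc (0:ℝ) 1, a y * z2' y * z' y) = c * z2 1 := by
          rw [← hz2I, ← MeasureTheory.integral_const_mul]
          apply setIntegral_congr_fun measurableSet_Ioc
          intro y hy
          show a y * z2' y * (c * fI y) = c * z2' y
          rw [hfI_eq y hy]
          field_simp [(ha y hy).ne']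
        have hcross2 : (∫ y in Set.Ioc (0:ℝ) 1, a y * z' y * z2' y) = c * z2 1 := by
          rw [← hz2I, ← MeasureTheory.integral_const_mul]
          apply setIntegral_congr_fun measurableSet_Ioc
          intro y hy
          show a y * (c * fI y) * z2' y = c * z2' y
          rw [hfI_eq y hy]
          field_simp [(ha y hy).ne']
        have ht2 := hz2var z z' hmemz
        have ht3 := hvar z2 z2' hz2
        rw [hcross1, hz1] at ht2
        rw [hcross2, hz1] at ht3
        -- show c * AA = z2 1
        have hst : c * AA = z2 1 := by
          by_cases hlam : lam = 0
          · have hc0 : c = 0 := by rw [hcdef, hlam]; simp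
            have ht0 : z2 1 = 0 := by
              rw [hlam] at ht1
              have h1 : β * a 1 * (z2 1 * z2 1) ≤ 0 := by nlinarith [ht1, hE20]
              have h2 : z2 1 * z2 1 ≤ 0 := by
                by_contra hcon
                push_neg at hcon
                nlinarith [mul_pos hβ hA1]
              exact mul_self_eq_zero.1 (le_antisymm h2 (mul_self_nonneg _))
            rw [hc0, ht0, zero_mul]
          · have h1 : lam * a 1 * (c * AA) = lam * a 1 * z2 1 := by linarith [ht2, ht3]
            exact mul_left_cancel₀ (mul_ne_zero hlam hA1.ne') h1
        have hEct : (∫ y in Set.Ioc (0:ℝ) 1, a y * z2' y ^ 2) = c * z2 1 := by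
          rw [← hst] at ht3 ht1
          nlinarith [ht1, ht3]
        have hcct : c^2 * AA = c * z2 1 := by rw [← hst]; ring
        -- expansion: ∫ a (z2' - z')² = 0
        have heq : Set.EqOn (fun y => a y * (z2' y - z' y)^2)
            (fun y => a y * z2' y^2 - (2*c) * z2' y + c^2 * (a y)⁻¹) (Set.Ioc 0 1) := by
          intro y hy
          show a y * (z2' y - c * fI y)^2 = a y * z2' y^2 - (2*c) * z2' y + c^2 * (a y)⁻¹
          rw [hfI_eq y hy]
          field_simp [(ha y hy).ne']
          ring
        have hi1 : IntegrableOn (fun y => a y * z2' y^2 - (2*c) * z2' y) (Set.Ioc 0 1) :=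
          hz2.1.2.2.sub (hz2int.const_mul (2*c))
        have hi2 : IntegrableOn (fun y => c^2 * (a y)⁻¹) (Set.Ioc 0 1) :=
          hinv.const_mul (c^2)
        have hi3 : IntegrableOn (fun y => (2*c) * z2' y) (Set.Ioc 0 1) :=
          hz2int.const_mul (2*c)
        have hint2 : IntegrableOn
            (fun y => a y * z2' y^2 - (2*c) * z2' y + c^2 * (a y)⁻¹) (Set.Ioc 0 1) :=
          hi1.add hi2
        have hw : (∫ y in Set.Ioc (0:ℝ) 1, a y * (z2' y - z' y)^2) = 0 := by
          rw [setIntegral_congr_fun measurableSet_Ioc heq]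
          rw [integral_add hi1 hi2, integral_sub hz2.1.2.2 hi3,
            MeasureTheory.integral_const_mul, MeasureTheory.integral_const_mul,
            hz2I, hAAeq, hEct]
          linear_combination hcct
        have hintw : IntegrableOn (fun y => a y * (z2' y - z' y)^2) (Set.Ioc 0 1) :=
          MeasureTheory.IntegrableOn.congr_fun hint2 heq.symm measurableSet_Ioc
        have hae : ∀ᵐ y ∂(volume.restrict (Set.Ioc (0:ℝ) 1)), z2' y = z' y := by
          have hzero : (fun y => a y * (z2' y - z' y)^2)
              =ᵐ[volume.restrict (Set.Ioc (0:ℝ) 1)] 0 := by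
            apply (integral_eq_zero_iff_of_nonneg_ae ?_ hintw).1 hw
            filter_upwards [ae_restrict_mem measurableSet_Ioc] with y hy
            exact mul_nonneg (ha y hy).le (sq_nonneg _)
          filter_upwards [hzero, ae_restrict_mem measurableSet_Ioc] with y h1 h2
          have h3 : a y * (z2' y - z' y)^2 = 0 := h1
          have h4 := (mul_eq_zero.1 h3).resolve_left (ne_of_gt (ha y h2))
          have h5 := pow_eq_zero_iff (n := 2) two_ne_zero |>.1 h4
          linarith [h5]
        have h9 := hz2.1.2.1 x hx 1 ⟨one_pos, le_refl 1⟩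
        have h10 := hmemz.1.2.1 x hx 1 ⟨one_pos, le_refl 1⟩
        rw [intervalIntegral.integral_of_le hx.2] at h9 h10
        have h11 : (∫ y in Set.Ioc x 1, z2' y) = ∫ y in Set.Ioc x 1, z' y :=
          integral_congr_ae (ae_restrict_of_ae_restrict_of_subset
            (Set.Ioc_subset_Ioc_left hx.1.le) hae)
        have hteq : z2 1 = z 1 := by rw [hz1, ← hst]
        linarith [h9, h10, h11, hteq]
      · -- pathological case: contradiction
        exfalso
        rcases ftc0 hz2.1.2.1 hz2.1.2.2 (hz2.2 hmua1) hinv ha with h | h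
        · exact hm h.1.aestronglyMeasurable
        obtain ⟨_, _, ht0⟩ := h
        rw [ht0] at ht1
        have hE2zero : (∫ y in Set.Ioc (0:ℝ) 1, a y * z2' y ^ 2) = 0 := by
          simpa using ht1
        have hzero : (fun y => a y * z2' y ^ 2)
            =ᵐ[volume.restrict (Set.Ioc (0:ℝ) 1)] 0 := by
          apply (integral_eq_zero_iff_of_nonneg_ae ?_ hz2.1.2.2).1 hE2zero
          filter_upwards [ae_restrict_mem measurableSet_Ioc] with y hy
          exact mul_nonneg (ha y hy).le (sq_nonneg _)
        have haez : z2' =ᵐ[volume.restrict (Set.Ioc (0:ℝ) 1)] (fun _ => 0) := by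
          filter_upwards [hzero, ae_restrict_mem measurableSet_Ioc] with y h1 h2
          have h3 : a y * z2' y ^ 2 = 0 := h1
          have h4 := (mul_eq_zero.1 h3).resolve_left (ne_of_gt (ha y h2))
          exact pow_eq_zero_iff (n := 2) two_ne_zero |>.1 h4
        exact hm (aestronglyMeasurable_const.congr haez.symm)
end

section
/- Let $\tau$ satisfy $0<\tau_0\le\tau(t)\le\tau_1$ and $0\le\tau'(t)\le d<1$, and let $g:\mathbb{R}\to\mathbb{R}$ be continuously differentiable. Define $F(t) = \tau(t)\int_0^1 e^{-2\delta\tau(t)} g^2(t-\delta\tau(t))\,d\delta$. Then $F'(t) \le -2F(t) + g^2(t)$. -/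
/-- Scalar version of Lemma 4.4: with
`F(t) = τ(t) ∫_0^1 e^{-2δτ(t)} g(t-δτ(t))² dδ`, one has `F'(t) ≤ -2F(t) + g(t)²`. -/
theorem stmt_14 (τ τ' g : ℝ → ℝ) (τ0 τ1 d : ℝ)
    (hτ0 : 0 < τ0) (hd0 : 0 ≤ d) (hd1 : d < 1)
    (hderiv : ∀ t, HasDerivAt τ (τ' t) t)
    (hbounds : ∀ t, τ0 ≤ τ t ∧ τ t ≤ τ1)
    (hτ' : ∀ t, 0 ≤ τ' t ∧ τ' t ≤ d)
    (hg : ContDiff ℝ 1 g)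
    (F : ℝ → ℝ)
    (hF : F = fun t => τ t * ∫ δ in (0:ℝ)..1,
      Real.exp (-2 * δ * τ t) * g (t - δ * τ t) ^ 2) :
    ∀ t F'', HasDerivAt F F'' t → F'' ≤ -2 * F t + g t ^ 2 := by
  -- h s = e^{2s} g(s)²
  set h : ℝ → ℝ := fun s => Real.exp (2 * s) * g s ^ 2 with hh
  have hgc : Continuous g := hg.continuous
  have hhc : Continuous h := by
    exact (Real.continuous_exp.comp (continuous_const.mul continuous_id)).mul (hgc.pow 2)
  -- antiderivative
  set A : ℝ → ℝ := fun x => ∫ s in (0:ℝ)..x, h s with hA'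
  have hA : ∀ x, HasDerivAt A (h x) x := fun x =>
    intervalIntegral.integral_hasDerivAt_right (hhc.intervalIntegrable _ _)
      (hhc.stronglyMeasurable.stronglyMeasurableAtFilter) hhc.continuousAt
  have hτpos : ∀ t, 0 < τ t := fun t => lt_of_lt_of_le hτ0 (hbounds t).1
  -- key rewriting of F
  have key : F = fun t => Real.exp (-2 * t) * (A t - A (t - τ t)) := by
    rw [hF]; funext t
    have hgfc : Continuous (fun s => Real.exp (-2 * t) * h s) := continuous_const.mul hhc
    have hsub : (∫ δ in (0:ℝ)..1, (fun _ => -(τ t)) δ •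
        ((fun s => Real.exp (-2 * t) * h s) ∘ (fun δ => t - δ * τ t)) δ)
        = ∫ s in (t - 0 * τ t)..(t - 1 * τ t), Real.exp (-2 * t) * h s := by
      exact intervalIntegral.integral_comp_smul_deriv
        (f := fun δ => t - δ * τ t) (f' := fun _ => -(τ t))
        (fun x _ => by
          have := ((hasDerivAt_id' x).mul_const (τ t)).const_sub t; rwa [one_mul] at this)
        continuousOn_const hgfc
    simp only [Function.comp, smul_eq_mul] at hsub
    have hτne : τ t ≠ 0 := (hτpos t).ne'
    have lhs_eq : (∫ δ in (0:ℝ)..1, -(τ t) *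
        (Real.exp (-2 * t) * h (t - δ * τ t)))
        = -(τ t) * ∫ δ in (0:ℝ)..1, Real.exp (-2 * t) * h (t - δ * τ t) :=
      intervalIntegral.integral_const_mul _ _
    have integrand_eq : ∀ δ : ℝ, Real.exp (-2 * t) * h (t - δ * τ t)
        = Real.exp (-2 * δ * τ t) * g (t - δ * τ t) ^ 2 := by
      intro δ
      show Real.exp (-2 * t) * (Real.exp (2 * (t - δ * τ t)) * g (t - δ * τ t) ^ 2)
          = Real.exp (-2 * δ * τ t) * g (t - δ * τ t) ^ 2
      rw [← mul_assoc, ← Real.exp_add]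
      congr 2
      ring
    have e1 : (∫ δ in (0:ℝ)..1, Real.exp (-2 * δ * τ t) * g (t - δ * τ t) ^ 2)
        = ∫ δ in (0:ℝ)..1, Real.exp (-2 * t) * h (t - δ * τ t) := by
      apply intervalIntegral.integral_congr
      intro δ _; exact (integrand_eq δ).symm
    rw [e1]
    have e2 : (∫ s in (t - 0 * τ t)..(t - 1 * τ t), Real.exp (-2 * t) * h s)
        = Real.exp (-2 * t) * (A (t - τ t) - A t) := by
      rw [intervalIntegral.integral_const_mul]
      congr 1
      rw [show t - 0 * τ t = t by ring, show t - 1 * τ t = t - τ t by ring]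
      rw [intervalIntegral.integral_interval_sub_left (hhc.intervalIntegrable _ _)
        (hhc.intervalIntegrable _ _)]
    rw [lhs_eq, e2] at hsub
    linear_combination -hsub
  -- derivative of the rewritten F
  intro t F'' hF''
  rw [key] at hF''
  have hB : HasDerivAt (fun s => A s - A (s - τ s))
      (h t - h (t - τ t) * (1 - τ' t)) t := by
    have h1 : HasDerivAt (fun s => s - τ s) (1 - τ' t) t :=
      (hasDerivAt_id t).sub (hderiv t)
    have h2 : HasDerivAt (fun s => A (s - τ s)) (h (t - τ t) * (1 - τ' t)) t :=
      HasDerivAt.comp (h₂ := A) t (hA (t - τ t)) h1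
    exact (hA t).sub h2
  have hE : HasDerivAt (fun s => Real.exp (-2 * s)) (Real.exp (-2 * t) * (-2)) t := by
    simpa using (((hasDerivAt_id t).const_mul (-2 : ℝ)).exp)
  have hΦ : HasDerivAt (fun s => Real.exp (-2 * s) * (A s - A (s - τ s)))
      (Real.exp (-2 * t) * (-2) * (A t - A (t - τ t)) +
        Real.exp (-2 * t) * (h t - h (t - τ t) * (1 - τ' t))) t := hE.mul hB
  have hFeq := hF''.unique hΦ
  rw [hFeq, key]
  show Real.exp (-2 * t) * -2 * (A t - A (t - τ t)) +
      Real.exp (-2 * t) * (h t - h (t - τ t) * (1 - τ' t))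
      ≤ -2 * (Real.exp (-2 * t) * (A t - A (t - τ t))) + g t ^ 2
  -- now prove the inequality
  have h1 : Real.exp (-2 * t) * h t = g t ^ 2 := by
    rw [hh, ← mul_assoc, ← Real.exp_add]
    norm_num
  have h2 : 0 ≤ Real.exp (-2 * t) * (h (t - τ t) * (1 - τ' t)) := by
    apply mul_nonneg (Real.exp_nonneg _)
    apply mul_nonneg
    · exact mul_nonneg (Real.exp_nonneg _) (sq_nonneg _)
    · linarith [(hτ' t).2]
  have h3 : Real.exp (-2 * t) * -2 * (A t - A (t - τ t)) +
      Real.exp (-2 * t) * (h t - h (t - τ t) * (1 - τ' t))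
      = -2 * (Real.exp (-2 * t) * (A t - A (t - τ t))) + g t ^ 2
        - Real.exp (-2 * t) * (h (t - τ t) * (1 - τ' t)) := by
    rw [← h1]; ring
  linarith [h2, h3.le]
end
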